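/- arXiv:1205.6522 — 5 statements merged into one kernel-verified Lean document; each statement's English description precedes it below -/
import Mathlib

section
/- Let 𝒱 be a category with functors [-,-] : 𝒱^op × 𝒱 → 𝒱 and -⊗- : 𝒱 × 𝒱 → 𝒱 and a natural isomorphism π : 𝒱(A⊗B,C) ≅ 𝒱(A,[B,C]); set e = π⁻¹(1_{[B,C]}) : [B,C]⊗B → C and d = π(1_{A⊗B}) : A → [B,A⊗B]. Then there are bijections among the following four classes: (i) natural transformations a : (A⊗B)⊗C → A⊗(B⊗C); (ii) natural transformations p : [B⊗C,D] → [B,[C,D]]; (iii) natural transformations L : [A,C] → [[B,A],[B,C]]; (iv) natural transformations M : [A,C]⊗[B,A] → [B,C]. The bijections are determined by: 𝒱(1,p) ∘ π = (π ∘ π) ∘ 𝒱(a,1) : 𝒱(A⊗(B⊗C),D) → 𝒱(A,[B,[C,D]]); L = p ∘ [e,1] and p = [d,1] ∘ L; M = e ∘ (L⊗1) and L = [1,M] ∘ d. -/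
/-!
Everything is the Yoneda lemma applied through `π`. Evaluating `𝒱(1,p) ∘ π = (π ∘ π) ∘ 𝒱(a,1)`
at the counit `k = e` (where `π e = 1`) expresses `p` through `a`, and at `k = 1` (where
`π 1 = d`) expresses `a` through `p`; this gives uniqueness, and the naturality of `π` carries
naturality across in both directions. The assignments `M = e ∘ (L ⊗ 1)` and `L = [1,M] ∘ d` are
just `π⁻¹` and `π` applied componentwise, so `L ↔ M` is `π` itself. For `p ↔ L`, naturality
of `p` (resp. of `L`) slides `[e,1]` past `[d,1]`, and the triangle identities finish both round
trips.
-/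

open CategoryTheory

universe v u w

/-- A left skew-closed category structure on a category `V` (Street, "Skew-closed categories"). -/
structure SkewClosedStruct (V : Type u) [Category.{v} V] where
  ihom : V → V → V
  imap : ∀ {A A' B B' : V}, (A' ⟶ A) → (B ⟶ B') → (ihom A B ⟶ ihom A' B')
  imap_id : ∀ (A B : V), imap (𝟙 A) (𝟙 B) = 𝟙 (ihom A B)
  imap_comp : ∀ {A A' A'' B B' B'' : V} (f : A' ⟶ A) (f' : A'' ⟶ A') (g : B ⟶ B') (g' : B' ⟶ B''),
      imap (f' ≫ f) (g ≫ g') = imap f g ≫ imap f' g'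
  unit : V
  i : ∀ A : V, ihom unit A ⟶ A
  i_natural : ∀ {A B : V} (f : A ⟶ B), imap (𝟙 unit) f ≫ i B = i A ≫ f
  j : ∀ A : V, unit ⟶ ihom A A
  j_natural : ∀ {A B : V} (f : A ⟶ B), j A ≫ imap (𝟙 A) f = j B ≫ imap f (𝟙 B)
  L : ∀ A B C : V, ihom B C ⟶ ihom (ihom A B) (ihom A C)
  L_natural : ∀ {B B' C C' : V} (A : V) (f : B' ⟶ B) (g : C ⟶ C'),
      imap f g ≫ L A B' C' = L A B C ≫ imap (imap (𝟙 A) f) (imap (𝟙 A) g)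
  L_extranatural : ∀ {A A' : V} (h : A' ⟶ A) (B C : V),
      L A B C ≫ imap (𝟙 (ihom A B)) (imap h (𝟙 C))
        = L A' B C ≫ imap (imap h (𝟙 B)) (𝟙 (ihom A' C))
  SCC1 : ∀ A B C D : V,
      L A C D ≫ L (ihom A B) (ihom A C) (ihom A D) ≫
          imap (L A B C) (𝟙 (ihom (ihom A B) (ihom A D)))
        = L B C D ≫ imap (𝟙 (ihom B C)) (L A B D)
  SCC2 : ∀ A C : V, L A A C ≫ imap (j A) (𝟙 (ihom A C)) ≫ i (ihom A C) = 𝟙 (ihom A C)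
  SCC3 : ∀ A B : V, j B ≫ L A B B = j (ihom A B)
  SCC4 : ∀ B C : V, L unit B C ≫ imap (𝟙 (ihom unit B)) (i C) = imap (i B) (𝟙 C)
  SCC5 : j unit ≫ i unit = 𝟙 unit

/-- The data of a functor `𝒱ᵒᵖ × 𝒱 ⟶ 𝒱` (an internal-hom candidate). -/
structure HomData (C : Type u) [Category.{v} C] where
  obj : C → C → C
  map : ∀ {A A' B B' : C}, (A' ⟶ A) → (B ⟶ B') → (obj A B ⟶ obj A' B')
  map_id : ∀ (A B : C), map (𝟙 A) (𝟙 B) = 𝟙 (obj A B)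
  map_comp : ∀ {A A' A'' B B' B'' : C} (f : A' ⟶ A) (f' : A'' ⟶ A') (g : B ⟶ B')
      (g' : B' ⟶ B''), map (f' ≫ f) (g ≫ g') = map f g ≫ map f' g'

/-- The data of a functor `𝒱 × 𝒱 ⟶ 𝒱` (a tensor-product candidate). -/
structure TenData (C : Type u) [Category.{v} C] where
  obj : C → C → C
  map : ∀ {A A' B B' : C}, (A ⟶ A') → (B ⟶ B') → (obj A B ⟶ obj A' B')
  map_id : ∀ (A B : C), map (𝟙 A) (𝟙 B) = 𝟙 (obj A B)
  map_comp : ∀ {A A' A'' B B' B'' : C} (f : A ⟶ A') (f' : A' ⟶ A'') (g : B ⟶ B')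
      (g' : B' ⟶ B''), map (f ≫ f') (g ≫ g') = map f g ≫ map f' g'

section Adjunction

variable {C : Type u} [Category.{v} C] (T : TenData C) (E : HomData C)
variable (π : ∀ A B D : C, (T.obj A B ⟶ D) ≃ (A ⟶ E.obj B D))

/-- The counit (evaluation) `e = π⁻¹(1) : [B,D] ⊗ B ⟶ D` of the tensor-hom adjunction. -/
def adjE (B D : C) : T.obj (E.obj B D) B ⟶ D := (π (E.obj B D) B D).symm (𝟙 (E.obj B D))

/-- The unit `d = π(1) : A ⟶ [B, A ⊗ B]` of the tensor-hom adjunction. -/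
def adjD (A B : C) : A ⟶ E.obj B (T.obj A B) := π A B (T.obj A B) (𝟙 (T.obj A B))

end Adjunction

section Thm13

variable {C : Type u} [Category.{v} C] (T : TenData C) (E : HomData C)
variable (π : ∀ A B D : C, (T.obj A B ⟶ D) ≃ (A ⟶ E.obj B D))

/-- Naturality (in all three variables) of a family `a : (A⊗B)⊗C ⟶ A⊗(B⊗C)`. -/
def IsNatA (a : ∀ A B C' : C, T.obj (T.obj A B) C' ⟶ T.obj A (T.obj B C')) : Prop :=
  ∀ {A A' B B' C₁ C₁' : C} (f : A ⟶ A') (g : B ⟶ B') (h : C₁ ⟶ C₁'),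
    T.map (T.map f g) h ≫ a A' B' C₁' = a A B C₁ ≫ T.map f (T.map g h)

/-- Naturality of a family `p : [B⊗C,D] ⟶ [B,[C,D]]`. -/
def IsNatP (p : ∀ B C' D : C, E.obj (T.obj B C') D ⟶ E.obj B (E.obj C' D)) : Prop :=
  ∀ {B B' C₁ C₁' D D' : C} (f : B' ⟶ B) (g : C₁' ⟶ C₁) (h : D ⟶ D'),
    E.map (T.map f g) h ≫ p B' C₁' D' = p B C₁ D ≫ E.map f (E.map g h)

/-- Naturality (in `A`, `C`) and extranaturality (in `B`) of a family
`L : [A,C] ⟶ [[B,A],[B,C]]` (here written `L X Y Z : [Y,Z] ⟶ [[X,Y],[X,Z]]`). -/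
def IsNatL (L : ∀ X Y Z : C, E.obj Y Z ⟶ E.obj (E.obj X Y) (E.obj X Z)) : Prop :=
  (∀ (X : C) {Y Y' Z Z' : C} (f : Y' ⟶ Y) (g : Z ⟶ Z'),
    E.map f g ≫ L X Y' Z' = L X Y Z ≫ E.map (E.map (𝟙 X) f) (E.map (𝟙 X) g)) ∧
  (∀ {X X' : C} (h : X' ⟶ X) (Y Z : C),
    L X Y Z ≫ E.map (𝟙 (E.obj X Y)) (E.map h (𝟙 Z))
      = L X' Y Z ≫ E.map (E.map h (𝟙 Y)) (𝟙 (E.obj X' Z)))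

/-- Naturality (in `B`, `C`) and extranaturality (in `A`) of a family
`M : [A,C] ⊗ [B,A] ⟶ [B,C]` (written `M B A C`). -/
def IsNatM (M : ∀ B A C' : C, T.obj (E.obj A C') (E.obj B A) ⟶ E.obj B C') : Prop :=
  (∀ {B B' C₁ C₁' : C} (A : C) (f : B' ⟶ B) (g : C₁ ⟶ C₁'),
    T.map (E.map (𝟙 A) g) (E.map f (𝟙 A)) ≫ M B' A C₁' = M B A C₁ ≫ E.map f g) ∧
  (∀ {A A' : C} (h : A' ⟶ A) (B C₁ : C),
    T.map (E.map h (𝟙 C₁)) (𝟙 (E.obj B A')) ≫ M B A' C₁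
      = T.map (𝟙 (E.obj A C₁)) (E.map (𝟙 B) h) ≫ M B A C₁)

/-- `L = p ∘ [e,1]`. -/
def LofP (p : ∀ B C' D : C, E.obj (T.obj B C') D ⟶ E.obj B (E.obj C' D)) (X Y Z : C) :
    E.obj Y Z ⟶ E.obj (E.obj X Y) (E.obj X Z) :=
  E.map (adjE T E π X Y) (𝟙 Z) ≫ p (E.obj X Y) X Z

/-- `p = [d,1] ∘ L`. -/
def POfL (L : ∀ X Y Z : C, E.obj Y Z ⟶ E.obj (E.obj X Y) (E.obj X Z)) (B C' D : C) :
    E.obj (T.obj B C') D ⟶ E.obj B (E.obj C' D) :=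
  L C' (T.obj B C') D ≫ E.map (adjD T E π B C') (𝟙 (E.obj C' D))

/-- `M = e ∘ (L ⊗ 1)`. -/
def MofL (L : ∀ X Y Z : C, E.obj Y Z ⟶ E.obj (E.obj X Y) (E.obj X Z)) (B A C' : C) :
    T.obj (E.obj A C') (E.obj B A) ⟶ E.obj B C' :=
  T.map (L B A C') (𝟙 (E.obj B A)) ≫ adjE T E π (E.obj B A) (E.obj B C')

/-- `L = [1,M] ∘ d`. -/
def LofM (M : ∀ B A C' : C, T.obj (E.obj A C') (E.obj B A) ⟶ E.obj B C') (B A C' : C) :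
    E.obj A C' ⟶ E.obj (E.obj B A) (E.obj B C') :=
  adjD T E π (E.obj A C') (E.obj B A) ≫ E.map (𝟙 (E.obj B A)) (M B A C')

namespace HomData

theorem map_comp_map {A A' A'' B B' B'' : C} (f : A' ⟶ A) (f' : A'' ⟶ A') (g : B ⟶ B')
    (g' : B' ⟶ B'') : E.map f g ≫ E.map f' g' = E.map (f' ≫ f) (g ≫ g') :=
  (E.map_comp f f' g g').symm

theorem map_comp_map_assoc {A A' A'' B B' B'' X : C} (f : A' ⟶ A) (f' : A'' ⟶ A')
    (g : B ⟶ B') (g' : B' ⟶ B'') (k : E.obj A'' B'' ⟶ X) :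
    E.map f g ≫ E.map f' g' ≫ k = E.map (f' ≫ f) (g ≫ g') ≫ k := by
  rw [← Category.assoc, map_comp_map]

theorem map_def {A A' B B' : C} (f : A' ⟶ A) (g : B ⟶ B') :
    E.map f g = E.map f (𝟙 B) ≫ E.map (𝟙 A') g := by
  rw [map_comp_map, Category.id_comp, Category.id_comp]

theorem map_def' {A A' B B' : C} (f : A' ⟶ A) (g : B ⟶ B') :
    E.map f g = E.map (𝟙 A) g ≫ E.map f (𝟙 B') := by
  rw [map_comp_map, Category.comp_id, Category.comp_id]

end HomData

namespace TenData

theorem map_comp_map {A A' A'' B B' B'' : C} (f : A ⟶ A') (f' : A' ⟶ A'') (g : B ⟶ B')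
    (g' : B' ⟶ B'') : T.map f g ≫ T.map f' g' = T.map (f ≫ f') (g ≫ g') :=
  (T.map_comp f f' g g').symm

theorem map_comp_map_assoc {A A' A'' B B' B'' X : C} (f : A ⟶ A') (f' : A' ⟶ A'')
    (g : B ⟶ B') (g' : B' ⟶ B'') (k : T.obj A'' B'' ⟶ X) :
    T.map f g ≫ T.map f' g' ≫ k = T.map (f ≫ f') (g ≫ g') ≫ k := by
  rw [← Category.assoc, map_comp_map]

theorem map_id_comm {A A' B B' : C} (f : A ⟶ A') (g : B ⟶ B') :
    T.map f (𝟙 B) ≫ T.map (𝟙 A') g = T.map (𝟙 A) g ≫ T.map f (𝟙 B') := by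
  rw [map_comp_map, map_comp_map, Category.id_comp, Category.id_comp, Category.comp_id,
    Category.comp_id]

end TenData

def IsNatPi : Prop :=
  ∀ {A A' B B' D D' : C} (f : A' ⟶ A) (g : B' ⟶ B) (h : D ⟶ D') (k : T.obj A B ⟶ D),
    π A' B' D' (T.map f g ≫ k ≫ h) = f ≫ π A B D k ≫ E.map g h

section NatPi

variable {T E π} (hπ : IsNatPi T E π)
include hπ

theorem pi_comp {A B D D' : C} (k : T.obj A B ⟶ D) (h : D ⟶ D') :
    π A B D' (k ≫ h) = π A B D k ≫ E.map (𝟙 B) h := by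
  simpa [T.map_id] using hπ (𝟙 A) (𝟙 B) h k

theorem pi_map_comp {A A' B B' D : C} (f : A' ⟶ A) (g : B' ⟶ B) (k : T.obj A B ⟶ D) :
    π A' B' D (T.map f g ≫ k) = f ≫ π A B D k ≫ E.map g (𝟙 D) := by
  simpa using hπ f g (𝟙 D) k

theorem pi_map_id_comp {A A' B D : C} (f : A' ⟶ A) (k : T.obj A B ⟶ D) :
    π A' B D (T.map f (𝟙 B) ≫ k) = f ≫ π A B D k := by
  simpa [E.map_id] using pi_map_comp hπ f (𝟙 B) k

theorem pi_comp_map {A B B' D D' : C} (k : T.obj A B ⟶ D) (g : B' ⟶ B) (h : D ⟶ D') :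
    π A B D k ≫ E.map g h = π A B' D' (T.map (𝟙 A) g ≫ k ≫ h) := by
  rw [hπ, Category.id_comp]

theorem pi_symm_naturality {A A' B B' D D' : C} (f : A' ⟶ A) (g : B' ⟶ B) (h : D ⟶ D')
    (m : A ⟶ E.obj B D) :
    (π A' B' D').symm (f ≫ m ≫ E.map g h) = T.map f g ≫ (π A B D).symm m ≫ h := by
  rw [Equiv.symm_apply_eq, hπ, Equiv.apply_symm_apply]

theorem pi_eq_adjD_comp {A B D : C} (k : T.obj A B ⟶ D) :
    π A B D k = adjD T E π A B ≫ E.map (𝟙 B) k := by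
  simpa [T.map_id, adjD] using hπ (𝟙 A) (𝟙 B) k (𝟙 _)

theorem pi_symm_eq_map_comp_adjE {A B D : C} (m : A ⟶ E.obj B D) :
    (π A B D).symm m = T.map m (𝟙 B) ≫ adjE T E π B D := by
  simpa [adjE, E.map_id] using pi_symm_naturality hπ m (𝟙 B) (𝟙 D) (𝟙 _)

theorem adjE_naturality {B B' D D' : C} (g : B' ⟶ B) (h : D ⟶ D') :
    T.map (E.map g h) (𝟙 B') ≫ adjE T E π B' D' = T.map (𝟙 _) g ≫ adjE T E π B D ≫ h := by
  rw [← pi_symm_eq_map_comp_adjE hπ]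
  simpa [adjE] using pi_symm_naturality hπ (𝟙 _) g h (𝟙 _)

theorem adjD_naturality {A₁ A₂ B₁ B₂ : C} (u : A₁ ⟶ A₂) (v : B₁ ⟶ B₂) :
    u ≫ adjD T E π A₂ B₂ ≫ E.map v (𝟙 _) = adjD T E π A₁ B₁ ≫ E.map (𝟙 B₁) (T.map u v) := by
  rw [adjD, ← hπ, ← pi_eq_adjD_comp hπ, Category.comp_id, Category.comp_id]

theorem map_adjD_comp_adjE (A B : C) :
    T.map (adjD T E π A B) (𝟙 B) ≫ adjE T E π B (T.obj A B) = 𝟙 _ := by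
  rw [← pi_symm_eq_map_comp_adjE hπ, adjD, Equiv.symm_apply_apply]

theorem adjD_comp_map_adjE (B D : C) :
    adjD T E π (E.obj B D) B ≫ E.map (𝟙 B) (adjE T E π B D) = 𝟙 _ := by
  rw [← pi_eq_adjD_comp hπ, adjE, Equiv.apply_symm_apply]

end NatPi

section AssocAndP

def PofA (a : ∀ A B C' : C, T.obj (T.obj A B) C' ⟶ T.obj A (T.obj B C')) (B C' D : C) :
    E.obj (T.obj B C') D ⟶ E.obj B (E.obj C' D) :=
  π _ B _ (π _ C' D (a (E.obj (T.obj B C') D) B C' ≫ adjE T E π (T.obj B C') D))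

def AofP (p : ∀ B C' D : C, E.obj (T.obj B C') D ⟶ E.obj B (E.obj C' D)) (A B C' : C) :
    T.obj (T.obj A B) C' ⟶ T.obj A (T.obj B C') :=
  (π _ C' _).symm ((π A B _).symm (adjD T E π A (T.obj B C') ≫ p B C' _))

def AssocCorresponds (a : ∀ A B C' : C, T.obj (T.obj A B) C' ⟶ T.obj A (T.obj B C'))
    (p : ∀ B C' D : C, E.obj (T.obj B C') D ⟶ E.obj B (E.obj C' D)) : Prop :=
  ∀ (A B C' D : C) (k : T.obj A (T.obj B C') ⟶ D),
    π A B (E.obj C' D) (π (T.obj A B) C' D (a A B C' ≫ k)) = π A (T.obj B C') D k ≫ p B C' D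

variable {T E π} {a : ∀ A B C' : C, T.obj (T.obj A B) C' ⟶ T.obj A (T.obj B C')}
  {p : ∀ B C' D : C, E.obj (T.obj B C') D ⟶ E.obj B (E.obj C' D)}

theorem AssocCorresponds.eq_PofA (h : AssocCorresponds T E π a p) : p = PofA T E π a := by
  funext B C' D
  have := h _ B C' D (adjE T E π (T.obj B C') D)
  rwa [adjE, Equiv.apply_symm_apply, Category.id_comp, eq_comm] at this

theorem AssocCorresponds.eq_AofP (h : AssocCorresponds T E π a p) : a = AofP T E π p := by
  funext A B C'
  rw [AofP, Equiv.eq_symm_apply, Equiv.eq_symm_apply, ← Category.comp_id (a A B C'), h, adjD]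

theorem assocCorresponds_PofA (hπ : IsNatPi T E π) (ha : IsNatA T a) :
    AssocCorresponds T E π a (PofA T E π a) := by
  intro A B C' D k
  -- `k` factors through the counit as `(π k ⊗ 1) ≫ e`, and `a` moves `π k` to the front
  have hk : a A B C' ≫ k = T.map (T.map (π _ _ D k) (𝟙 B)) (𝟙 C')
      ≫ a _ B C' ≫ adjE T E π (T.obj B C') D := by
    conv_lhs => rw [← (π _ _ D).symm_apply_apply k, pi_symm_eq_map_comp_adjE hπ]
    rw [← Category.assoc, ← T.map_id, ← ha, Category.assoc]
  rw [hk, pi_map_id_comp hπ, pi_map_id_comp hπ, PofA]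

theorem assocCorresponds_AofP (hπ : IsNatPi T E π) (hp : IsNatP T E p) :
    AssocCorresponds T E π (AofP T E π p) p := by
  intro A B C' D k
  have hpk := hp (𝟙 B) (𝟙 C') k
  rw [T.map_id] at hpk
  rw [AofP, pi_comp hπ, Equiv.apply_symm_apply, pi_comp hπ, Equiv.apply_symm_apply,
    Category.assoc, ← hpk, pi_eq_adjD_comp hπ k, Category.assoc]

theorem AssocCorresponds.isNatP (hπ : IsNatPi T E π) (ha : IsNatA T a)
    (h : AssocCorresponds T E π a p) :
    IsNatP T E p := by
  intro B B' C₁ C₁' D D' f g k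
  set X := E.obj (T.obj B C₁) D
  have hsymm : (π X (T.obj B' C₁') D').symm (E.map (T.map f g) k)
      = T.map (𝟙 X) (T.map f g) ≫ adjE T E π (T.obj B C₁) D ≫ k := by
    simpa [adjE] using pi_symm_naturality hπ (𝟙 X) (T.map f g) k (𝟙 X)
  calc E.map (T.map f g) k ≫ p B' C₁' D'
      = π X B' _ (π _ C₁' D' (a X B' C₁' ≫ (π X _ D').symm (E.map (T.map f g) k))) := by
        rw [h, Equiv.apply_symm_apply]
    _ = π X B' _ (π _ C₁' D' (T.map (T.map (𝟙 X) f) g ≫ (a X B C₁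
          ≫ adjE T E π (T.obj B C₁) D) ≫ k)) := by
        rw [hsymm, ← Category.assoc, ← ha]
        simp only [Category.assoc]
    _ = p B C₁ D ≫ E.map f (E.map g k) := by
        rw [hπ, hπ, Category.id_comp, h, adjE, Equiv.apply_symm_apply, Category.id_comp]

theorem AssocCorresponds.isNatA (hπ : IsNatPi T E π) (hp : IsNatP T E p)
    (h : AssocCorresponds T E π a p) :
    IsNatA T a := by
  intro A A' B B' C₁ C₁' f g k
  apply (π _ C₁ _).injective
  apply (π A B _).injective
  have ha' := h A' B' C₁' _ (𝟙 _)
  rw [Category.comp_id, ← adjD] at ha'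
  calc π A B _ (π _ C₁ _ (T.map (T.map f g) k ≫ a A' B' C₁'))
      = (f ≫ adjD T E π A' _ ≫ E.map (T.map g k) (𝟙 _)) ≫ p B C₁ _ := by
        rw [← Category.comp_id (a A' B' C₁'), hπ, hπ, ha']
        simp only [Category.assoc]
        rw [hp]
    _ = (adjD T E π A _ ≫ E.map (𝟙 _) (T.map f (T.map g k))) ≫ p B C₁ _ := by
        rw [adjD_naturality hπ]
    _ = π A B _ (π _ C₁ _ (a A B C₁ ≫ T.map f (T.map g k))) := by
        rw [h, pi_eq_adjD_comp hπ]

end AssocAndP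

section PAndL

variable {T E π} (hπ : IsNatPi T E π)
include hπ

theorem isNatL_LofP {p : ∀ B C' D : C, E.obj (T.obj B C') D ⟶ E.obj B (E.obj C' D)}
    (hp : IsNatP T E p) : IsNatL E (LofP T E π p) := by
  constructor
  · intro X Y Y' Z Z' f g
    have he : adjE T E π X Y' ≫ f = T.map (E.map (𝟙 X) f) (𝟙 X) ≫ adjE T E π X Y := by
      rw [adjE_naturality hπ, T.map_id, Category.id_comp]
    rw [LofP, LofP, E.map_comp_map_assoc, Category.comp_id, he, Category.assoc, ← hp,
      E.map_comp_map_assoc, Category.id_comp]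
  · intro X X' h Y Z
    have hp' := hp (E.map h (𝟙 Y)) (𝟙 X') (𝟙 Z)
    rw [E.map_id] at hp'
    rw [LofP, LofP, Category.assoc, ← hp, Category.assoc, ← hp', E.map_comp_map_assoc,
      E.map_comp_map_assoc, adjE_naturality hπ, Category.comp_id, Category.comp_id]

theorem POfL_LofP {p : ∀ B C' D : C, E.obj (T.obj B C') D ⟶ E.obj B (E.obj C' D)}
    (hp : IsNatP T E p) (B C' D : C) : POfL T E π (LofP T E π p) B C' D = p B C' D := by
  have hp' := hp (adjD T E π B C') (𝟙 C') (𝟙 D)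
  rw [E.map_id] at hp'
  rw [POfL, LofP, Category.assoc, ← hp', E.map_comp_map_assoc, map_adjD_comp_adjE hπ,
    Category.id_comp, E.map_id, Category.id_comp]

theorem isNatP_POfL {L : ∀ X Y Z : C, E.obj Y Z ⟶ E.obj (E.obj X Y) (E.obj X Z)}
    (hL : IsNatL E L) : IsNatP T E (POfL T E π L) := by
  intro B B' C₁ C₁' D D' f g h
  calc E.map (T.map f g) h ≫ POfL T E π L B' C₁' D'
      = L C₁' _ D ≫ E.map (f ≫ adjD T E π B C₁ ≫ E.map g (𝟙 _)) (E.map (𝟙 C₁') h) := by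
        rw [POfL, ← Category.assoc, hL.1, Category.assoc, E.map_comp_map, Category.comp_id,
          ← adjD_naturality hπ]
    _ = (L C₁' _ D ≫ E.map (E.map g (𝟙 _)) (𝟙 _))
          ≫ E.map (f ≫ adjD T E π B C₁) (E.map (𝟙 C₁') h) := by
        rw [Category.assoc, E.map_comp_map, Category.id_comp, Category.assoc]
    _ = (L C₁ _ D ≫ E.map (𝟙 _) (E.map g (𝟙 D)))
          ≫ E.map (f ≫ adjD T E π B C₁) (E.map (𝟙 C₁') h) := by
        rw [hL.2]
    _ = POfL T E π L B C₁ D ≫ E.map f (E.map g h) := by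
        simp only [POfL, Category.assoc, E.map_comp_map, Category.comp_id, Category.id_comp]

theorem LofP_POfL {L : ∀ X Y Z : C, E.obj Y Z ⟶ E.obj (E.obj X Y) (E.obj X Z)}
    (hL : IsNatL E L) (X Y Z : C) : LofP T E π (POfL T E π L) X Y Z = L X Y Z := by
  have hL' := hL.1 X (adjE T E π X Y) (𝟙 Z)
  rw [E.map_id] at hL'
  rw [LofP, POfL, ← Category.assoc, hL', Category.assoc, E.map_comp_map, adjD_comp_map_adjE hπ,
    Category.comp_id, E.map_id, Category.comp_id]

end PAndL

section LAndM

variable {T E π} (hπ : IsNatPi T E π)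
include hπ

theorem MofL_eq_pi_symm (L : ∀ X Y Z : C, E.obj Y Z ⟶ E.obj (E.obj X Y) (E.obj X Z))
    (B A C' : C) : MofL T E π L B A C' = (π _ _ _).symm (L B A C') :=
  (pi_symm_eq_map_comp_adjE hπ _).symm

theorem LofM_eq_pi (M : ∀ B A C' : C, T.obj (E.obj A C') (E.obj B A) ⟶ E.obj B C')
    (B A C' : C) : LofM T E π M B A C' = π _ _ _ (M B A C') :=
  (pi_eq_adjD_comp hπ _).symm

theorem LofM_MofL (L : ∀ X Y Z : C, E.obj Y Z ⟶ E.obj (E.obj X Y) (E.obj X Z)) (B A C' : C) :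
    LofM T E π (MofL T E π L) B A C' = L B A C' := by
  rw [LofM_eq_pi hπ, MofL_eq_pi_symm hπ, Equiv.apply_symm_apply]

theorem MofL_LofM (M : ∀ B A C' : C, T.obj (E.obj A C') (E.obj B A) ⟶ E.obj B C') (B A C' : C) :
    MofL T E π (LofM T E π M) B A C' = M B A C' := by
  rw [MofL_eq_pi_symm hπ, LofM_eq_pi hπ, Equiv.symm_apply_apply]

theorem isNatM_MofL {L : ∀ X Y Z : C, E.obj Y Z ⟶ E.obj (E.obj X Y) (E.obj X Z)}
    (hL : IsNatL E L) : IsNatM T E (MofL T E π L) := by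
  constructor
  · intro B B' C₁ C₁' A f g
    apply (π _ _ _).injective
    rw [MofL_eq_pi_symm hπ, MofL_eq_pi_symm hπ, pi_map_comp hπ, pi_comp hπ,
      Equiv.apply_symm_apply, Equiv.apply_symm_apply]
    have hL₁ := hL.1 B' (𝟙 A) g
    have hL₂ := hL.2 f A C₁
    rw [E.map_id] at hL₁
    rw [← Category.assoc, hL₁, E.map_def f g, ← Category.comp_id (𝟙 (E.obj B A)),
      ← E.map_comp_map, ← Category.assoc, hL₂]
    simp only [Category.assoc, E.map_comp_map, Category.comp_id, Category.id_comp]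
  · intro A A' h B C₁
    apply (π _ _ _).injective
    rw [MofL_eq_pi_symm hπ, MofL_eq_pi_symm hπ, pi_map_comp hπ, pi_map_comp hπ,
      Equiv.apply_symm_apply, Equiv.apply_symm_apply, E.map_id, Category.comp_id,
      Category.id_comp]
    simpa [E.map_id] using hL.1 B h (𝟙 C₁)

theorem isNatL_LofM {M : ∀ B A C' : C, T.obj (E.obj A C') (E.obj B A) ⟶ E.obj B C'}
    (hM : IsNatM T E M) : IsNatL E (LofM T E π M) := by
  constructor
  · intro X Y Y' Z Z' f g
    rw [LofM_eq_pi hπ, LofM_eq_pi hπ, ← pi_map_id_comp hπ, pi_comp_map hπ]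
    congr 1
    have hM₁ := hM.2 f X Z'
    have hM₂ := hM.1 Y (𝟙 X) g
    rw [E.map_id] at hM₂
    rw [E.map_def' f g, ← Category.comp_id (𝟙 (E.obj X Y')), ← T.map_comp_map_assoc, hM₁,
      ← Category.assoc, T.map_id_comm, Category.assoc, hM₂]
  · intro X X' h Y Z
    rw [LofM_eq_pi hπ, LofM_eq_pi hπ, pi_comp_map hπ, pi_comp_map hπ]
    congr 1
    simpa [E.map_id, T.map_id] using (hM.1 Y h (𝟙 Z)).symm

end LAndM

/-- (Street, "Skew-closed categories", §7, diagrams (24)–(28).)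
Given a category `𝒱` with functors `[-,-]` and `⊗` and a natural isomorphism
`π : 𝒱(A⊗B,C) ≅ 𝒱(A,[B,C])` (with counit `e` and unit `d`), there are bijections among
natural transformations `a : (A⊗B)⊗C ⟶ A⊗(B⊗C)`, `p : [B⊗C,D] ⟶ [B,[C,D]]`,
`L : [A,C] ⟶ [[B,A],[B,C]]` and `M : [A,C]⊗[B,A] ⟶ [B,C]`, determined by
`𝒱(1,p)∘π = (π∘π)∘𝒱(a,1)`, `L = p∘[e,1]`, `p = [d,1]∘L`, `M = e∘(L⊗1)`, `L = [1,M]∘d`. -/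
theorem four_way_bijection
    (hπ : ∀ {A A' B B' D D' : C} (f : A' ⟶ A) (g : B' ⟶ B) (h : D ⟶ D')
        (k : T.obj A B ⟶ D),
      π A' B' D' (T.map f g ≫ k ≫ h) = f ≫ π A B D k ≫ E.map g h) :
    -- `a ↦ p` : for each natural `a` there is a unique natural `p` with
    -- `𝒱(1,p)∘π = (π∘π)∘𝒱(a,1)`, and conversely
    (∀ a, IsNatA T a →
      ∃! p : ∀ B C' D : C, E.obj (T.obj B C') D ⟶ E.obj B (E.obj C' D),
        IsNatP T E p ∧
        ∀ (A B C' D : C) (k : T.obj A (T.obj B C') ⟶ D),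
          π A B (E.obj C' D) (π (T.obj A B) C' D (a A B C' ≫ k))
            = π A (T.obj B C') D k ≫ p B C' D) ∧
    (∀ p, IsNatP T E p →
      ∃! a : ∀ A B C' : C, T.obj (T.obj A B) C' ⟶ T.obj A (T.obj B C'),
        IsNatA T a ∧
        ∀ (A B C' D : C) (k : T.obj A (T.obj B C') ⟶ D),
          π A B (E.obj C' D) (π (T.obj A B) C' D (a A B C' ≫ k))
            = π A (T.obj B C') D k ≫ p B C' D) ∧
    -- `p ↔ L` : the assignments `L = p∘[e,1]` and `p = [d,1]∘L` are mutually inverse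
    (∀ p, IsNatP T E p →
      IsNatL E (LofP T E π p) ∧ ∀ B C' D : C, POfL T E π (LofP T E π p) B C' D = p B C' D) ∧
    (∀ L, IsNatL E L →
      IsNatP T E (POfL T E π L) ∧ ∀ X Y Z : C, LofP T E π (POfL T E π L) X Y Z = L X Y Z) ∧
    -- `L ↔ M` : the assignments `M = e∘(L⊗1)` and `L = [1,M]∘d` are mutually inverse
    (∀ L, IsNatL E L →
      IsNatM T E (MofL T E π L) ∧ ∀ B A C' : C, LofM T E π (MofL T E π L) B A C' = L B A C') ∧
    (∀ M, IsNatM T E M →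
      IsNatL E (LofM T E π M) ∧ ∀ B A C' : C, MofL T E π (LofM T E π M) B A C' = M B A C') := by
  refine ⟨fun a ha => ?_, fun p hp => ?_, fun p hp => ⟨isNatL_LofP hπ hp, POfL_LofP hπ hp⟩,
    fun L hL => ⟨isNatP_POfL hπ hL, LofP_POfL hπ hL⟩,
    fun L hL => ⟨isNatM_MofL hπ hL, LofM_MofL hπ L⟩,
    fun M hM => ⟨isNatL_LofM hπ hM, MofL_LofM hπ M⟩⟩
  · have h := assocCorresponds_PofA hπ ha
    exact ⟨PofA T E π a, ⟨h.isNatP hπ ha, h⟩, fun q hq => AssocCorresponds.eq_PofA hq.2⟩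
  · have h := assocCorresponds_AofP hπ hp
    exact ⟨AofP T E π p, ⟨h.isNatA hπ hp, h⟩, fun b hb => AssocCorresponds.eq_AofP hb.2⟩

end Thm13
end

section
/- Let 𝒱 be a category with functors [-,-] : 𝒱^op × 𝒱 → 𝒱 and -⊗- : 𝒱 × 𝒱 → 𝒱, an object I, and a natural isomorphism π : 𝒱(A⊗B,C) ≅ 𝒱(A,[B,C]); set e = π⁻¹(1_{[B,C]}) and d = π(1_{A⊗B}). Then the assignments ℓ ↦ j = [1,ℓ_A] ∘ d : I → [A,A] and j ↦ ℓ = e ∘ (j_A⊗1_A) : I⊗A → A are mutually inverse bijections between natural transformations ℓ : I⊗A → A and natural transformations j : I → [A,A]. -/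
/-!
By naturality of `π`, the composite `[1,ℓ_A] ∘ d` is just `π ℓ_A` and `e ∘ (j_A ⊗ 1)` is `π⁻¹ j_A`,
so the two assignments are componentwise `π` and `π⁻¹`. Applying `π` to both sides of the naturality
square `ℓ_B ∘ (1 ⊗ f) = f ∘ ℓ_A` and using naturality of `π` in the second and third variables turns
it into the dinaturality square `[f,1] ∘ π ℓ_B = [1,f] ∘ π ℓ_A` of `j`, and conversely.
-/

open CategoryTheory

universe v u w

section Thm14

variable {C : Type u} [Category.{v} C] (T : TenData C) (E : HomData C) (I : C)
variable (π : ∀ A B D : C, (T.obj A B ⟶ D) ≃ (A ⟶ E.obj B D))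

/-- `j = [1,ℓ] ∘ d`. -/
def JofL (l : ∀ A : C, T.obj I A ⟶ A) (A : C) : I ⟶ E.obj A A :=
  adjD T E π I A ≫ E.map (𝟙 A) (l A)

/-- `ℓ = e ∘ (j ⊗ 1)`. -/
def LofJ (j : ∀ A : C, I ⟶ E.obj A A) (A : C) : T.obj I A ⟶ A :=
  T.map (j A) (𝟙 A) ≫ adjE T E π A A

def HomTensorNatural : Prop :=
  ∀ {A A' B B' D D' : C} (f : A' ⟶ A) (g : B' ⟶ B) (h : D ⟶ D') (k : T.obj A B ⟶ D),
    π A' B' D' (T.map f g ≫ k ≫ h) = f ≫ π A B D k ≫ E.map g h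

namespace HomTensorNatural

variable {T E I π} (hπ : HomTensorNatural T E π)
include hπ

theorem apply_comp {A B D D' : C} (k : T.obj A B ⟶ D) (h : D ⟶ D') :
    π A B D' (k ≫ h) = π A B D k ≫ E.map (𝟙 B) h := by
  simpa [T.map_id] using hπ (𝟙 A) (𝟙 B) h k

theorem apply_map_id_comp {A B B' D : C} (g : B' ⟶ B) (k : T.obj A B ⟶ D) :
    π A B' D (T.map (𝟙 A) g ≫ k) = π A B D k ≫ E.map g (𝟙 D) := by
  simpa using hπ (𝟙 A) g (𝟙 D) k

theorem apply_map_comp_id {A A' B D : C} (f : A' ⟶ A) (k : T.obj A B ⟶ D) :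
    π A' B D (T.map f (𝟙 B) ≫ k) = f ≫ π A B D k := by
  simpa [E.map_id] using hπ f (𝟙 B) (𝟙 D) k

theorem JofL_eq (l : ∀ A : C, T.obj I A ⟶ A) (A : C) : JofL T E I π l A = π I A A (l A) := by
  rw [JofL, adjD, ← hπ.apply_comp, Category.id_comp]

theorem LofJ_eq (j : ∀ A : C, I ⟶ E.obj A A) (A : C) :
    LofJ T E I π j A = (π I A A).symm (j A) := by
  rw [Equiv.eq_symm_apply, LofJ, hπ.apply_map_comp_id, adjE, Equiv.apply_symm_apply,
    Category.comp_id]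

theorem natural_iff_dinatural (l : ∀ A : C, T.obj I A ⟶ A) {A B : C} (f : A ⟶ B) :
    T.map (𝟙 I) f ≫ l B = l A ≫ f ↔
      π I A A (l A) ≫ E.map (𝟙 A) f = π I B B (l B) ≫ E.map f (𝟙 B) := by
  rw [← (π I A B).apply_eq_iff_eq, hπ.apply_map_id_comp, hπ.apply_comp, eq_comm]

end HomTensorNatural

/-- (Street, "Skew-closed categories", §7, diagrams (29) and (30).)
Given a category `𝒱` with functors `[-,-]` and `⊗`, an object `I`, and a natural
isomorphism `π : 𝒱(A⊗B,C) ≅ 𝒱(A,[B,C])`, the assignments `ℓ ↦ j = [1,ℓ]∘d` and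
`j ↦ ℓ = e∘(j⊗1)` are mutually inverse bijections between natural transformations
`ℓ : I⊗A ⟶ A` and natural transformations `j : I ⟶ [A,A]`. -/
theorem left_unit_vs_j
    (hπ : ∀ {A A' B B' D D' : C} (f : A' ⟶ A) (g : B' ⟶ B) (h : D ⟶ D')
        (k : T.obj A B ⟶ D),
      π A' B' D' (T.map f g ≫ k ≫ h) = f ≫ π A B D k ≫ E.map g h) :
    (∀ l : ∀ A : C, T.obj I A ⟶ A,
      (∀ {A B : C} (f : A ⟶ B), T.map (𝟙 I) f ≫ l B = l A ≫ f) →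
      (∀ {A B : C} (f : A ⟶ B),
        JofL T E I π l A ≫ E.map (𝟙 A) f = JofL T E I π l B ≫ E.map f (𝟙 B)) ∧
      (∀ A : C, LofJ T E I π (JofL T E I π l) A = l A)) ∧
    (∀ j : ∀ A : C, I ⟶ E.obj A A,
      (∀ {A B : C} (f : A ⟶ B), j A ≫ E.map (𝟙 A) f = j B ≫ E.map f (𝟙 B)) →
      (∀ {A B : C} (f : A ⟶ B),
        T.map (𝟙 I) f ≫ LofJ T E I π j B = LofJ T E I π j A ≫ f) ∧
      (∀ A : C, JofL T E I π (LofJ T E I π j) A = j A)) := by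
  have hπ : HomTensorNatural T E π := @hπ
  refine ⟨fun l hl => ⟨fun f => ?_, fun A => ?_⟩, fun j hj => ⟨fun f => ?_, fun A => ?_⟩⟩
  · simpa only [hπ.JofL_eq] using (hπ.natural_iff_dinatural l f).1 (hl f)
  · rw [hπ.LofJ_eq, hπ.JofL_eq, Equiv.symm_apply_apply]
  · rw [hπ.natural_iff_dinatural, hπ.LofJ_eq, hπ.LofJ_eq, Equiv.apply_symm_apply,
      Equiv.apply_symm_apply]
    exact hj f
  · rw [hπ.JofL_eq, hπ.LofJ_eq, Equiv.apply_symm_apply]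

end Thm14
end

section
/- Let F : 𝒱 → 𝒲 be a closed functor between left skew-closed categories. For each 𝒱-category 𝒜, the data consisting of the objects of 𝒜, hom-objects F𝒜(A,B), units F(j_A) ∘ ψ₀ : I → F𝒜(A,A), and composition maps ψ ∘ F(L^A_{B,C}) : F𝒜(B,C) → [F𝒜(A,B),F𝒜(A,C)] satisfy axioms (EC1)–(EC3), so define a 𝒲-category F_*𝒜. For each 𝒱-functor T : 𝒜 → 𝒳, the same object function together with the morphisms F(T_{A,B}) : F𝒜(A,B) → F𝒳(TA,TB) satisfies (EF1)–(EF2), so defines a 𝒲-functor F_*T : F_*𝒜 → F_*𝒳. Moreover F_*(1_𝒜) = 1_{F_*𝒜} and F_*(S∘T) = F_*S ∘ F_*T, so F_* is a functor from the category of 𝒱-categories and 𝒱-functors to the category of 𝒲-categories and 𝒲-functors. -/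
open CategoryTheory

universe v u w

/-- A category enriched in the left skew-closed category `𝒱`. -/
structure VCat (V : Type u) [Category.{v} V] (𝒱 : SkewClosedStruct V) where
  Obj : Type w
  Hom : Obj → Obj → V
  id : ∀ A, 𝒱.unit ⟶ Hom A A
  comp : ∀ A B C, Hom B C ⟶ 𝒱.ihom (Hom A B) (Hom A C)
  EC1 : ∀ A B C D,
      comp A C D ≫ 𝒱.L (Hom A B) (Hom A C) (Hom A D) ≫
          𝒱.imap (comp A B C) (𝟙 (𝒱.ihom (Hom A B) (Hom A D)))
        = comp B C D ≫ 𝒱.imap (𝟙 (Hom B C)) (comp A B D)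
  EC2 : ∀ A C, comp A A C ≫ 𝒱.imap (id A) (𝟙 (Hom A C)) ≫ 𝒱.i (Hom A C) = 𝟙 (Hom A C)
  EC3 : ∀ A B, id B ≫ comp A B B = 𝒱.j (Hom A B)

/-- A `𝒱`-functor between `𝒱`-categories. -/
structure VFun {V : Type u} [Category.{v} V] {𝒱 : SkewClosedStruct V}
    (𝒜 : VCat.{v, u, w} V 𝒱) (𝒳 : VCat.{v, u, w} V 𝒱) where
  obj : 𝒜.Obj → 𝒳.Obj
  map : ∀ A B, 𝒜.Hom A B ⟶ 𝒳.Hom (obj A) (obj B)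
  EF1 : ∀ A B C,
      map A C ≫ 𝒳.comp (obj B) (obj A) (obj C) ≫
          𝒱.imap (map B A) (𝟙 (𝒳.Hom (obj B) (obj C)))
        = 𝒜.comp B A C ≫ 𝒱.imap (𝟙 (𝒜.Hom B A)) (map B C)
  EF2 : ∀ A, 𝒜.id A ≫ map A A = 𝒳.id (obj A)

/-- The ground skew-closed category `𝒱`, regarded as a `𝒱`-category. -/
@[reducible] def SkewClosedStruct.self {V : Type u} [Category.{v} V] (𝒱 : SkewClosedStruct V) :
    VCat.{v, u, u} V 𝒱 where
  Obj := V
  Hom := 𝒱.ihom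
  id := 𝒱.j
  comp := 𝒱.L
  EC1 := 𝒱.SCC1
  EC2 := 𝒱.SCC2
  EC3 := 𝒱.SCC3

/-- A `𝒱`-natural transformation between `𝒱`-functors with values in `𝒱` itself. -/
structure VNat {V : Type u} [Category.{v} V] {𝒱 : SkewClosedStruct V}
    {𝒜 : VCat.{v, u, u} V 𝒱} (S T : VFun 𝒜 𝒱.self) where
  app : ∀ A, S.obj A ⟶ T.obj A
  naturality : ∀ A B,
      T.map A B ≫ 𝒱.imap (app A) (𝟙 (T.obj B))
        = S.map A B ≫ 𝒱.imap (𝟙 (S.obj A)) (app B)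

/-- The representable `𝒱`-functor `𝒜(K,-) : 𝒜 ⟶ 𝒱`. -/
def VCat.repr {V : Type u} [Category.{v} V] {𝒱 : SkewClosedStruct V}
    (𝒜 : VCat.{v, u, u} V 𝒱) (K : 𝒜.Obj) : VFun 𝒜 𝒱.self where
  obj := fun A => 𝒜.Hom K A
  map := fun A B => 𝒜.comp K A B
  EF1 := fun A B C => 𝒜.EC1 K B A C
  EF2 := fun A => 𝒜.EC3 K A

/-- A closed functor between left skew-closed categories. -/
structure ClosedFunctorStruct {V : Type u} {W : Type w} [Category.{v} V] [Category.{v} W]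
    (𝒱 : SkewClosedStruct V) (𝒲 : SkewClosedStruct W) (F : V ⥤ W) where
  ψ0 : 𝒲.unit ⟶ F.obj 𝒱.unit
  ψ : ∀ A B : V, F.obj (𝒱.ihom A B) ⟶ 𝒲.ihom (F.obj A) (F.obj B)
  ψ_natural : ∀ {A A' B B' : V} (f : A' ⟶ A) (g : B ⟶ B'),
      F.map (𝒱.imap f g) ≫ ψ A' B' = ψ A B ≫ 𝒲.imap (F.map f) (F.map g)
  SCF1 : ∀ A : V,
      ψ 𝒱.unit A ≫ 𝒲.imap ψ0 (𝟙 (F.obj A)) ≫ 𝒲.i (F.obj A) = F.map (𝒱.i A)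
  SCF2 : ∀ A : V, ψ0 ≫ F.map (𝒱.j A) ≫ ψ A A = 𝒲.j (F.obj A)
  SCF3 : ∀ A B C : V,
      F.map (𝒱.L A B C) ≫ ψ (𝒱.ihom A B) (𝒱.ihom A C) ≫
          𝒲.imap (𝟙 (F.obj (𝒱.ihom A B))) (ψ A C)
        = ψ B C ≫ 𝒲.L (F.obj A) (F.obj B) (F.obj C) ≫
            𝒲.imap (ψ A B) (𝟙 (𝒲.ihom (F.obj A) (F.obj C)))

universe w₂

section PushForward

variable {V : Type u} [Category.{v} V] {W : Type w} [Category.{v} W]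
variable {𝒱 : SkewClosedStruct V} {𝒲 : SkewClosedStruct W} {F : V ⥤ W}

/-- Unit of the pushforward `𝒲`-category `F_*𝒜`: `I ⟶ FI ⟶ F𝒜(A,A)`. -/
def pushJ (cF : ClosedFunctorStruct 𝒱 𝒲 F) (𝒜 : VCat.{v, u, w₂} V 𝒱) (A : 𝒜.Obj) :
    𝒲.unit ⟶ F.obj (𝒜.Hom A A) :=
  cF.ψ0 ≫ F.map (𝒜.id A)

/-- Composition of the pushforward `𝒲`-category `F_*𝒜`:
`F𝒜(B,C) ⟶ F[𝒜(A,B),𝒜(A,C)] ⟶ [F𝒜(A,B), F𝒜(A,C)]`. -/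
def pushL (cF : ClosedFunctorStruct 𝒱 𝒲 F) (𝒜 : VCat.{v, u, w₂} V 𝒱) (A B C : 𝒜.Obj) :
    F.obj (𝒜.Hom B C) ⟶ 𝒲.ihom (F.obj (𝒜.Hom A B)) (F.obj (𝒜.Hom A C)) :=
  F.map (𝒜.comp A B C) ≫ cF.ψ (𝒜.Hom A B) (𝒜.Hom A C)

/-! Every axiom for `F₊𝒜` and `F₊T` is the image under `F` of the corresponding axiom for `𝒜`
or `T`, moved across `ψ` by its naturality; the closed-functor axioms supply the remaining
squares: (SCF3) for (EC1), (SCF1) for (EC2) and (SCF2) for (EC3). Functoriality of `F₊` is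
functoriality of `F`. -/

namespace SkewClosedStruct

variable {C : Type*} [Category C] (𝒞 : SkewClosedStruct C)

theorem imap_comp_left {A A' A'' B : C} (f : A' ⟶ A) (f' : A'' ⟶ A') :
    𝒞.imap (f' ≫ f) (𝟙 B) = 𝒞.imap f (𝟙 B) ≫ 𝒞.imap f' (𝟙 B) := by
  rw [← 𝒞.imap_comp, Category.id_comp]

theorem imap_comp_right {A B B' B'' : C} (g : B ⟶ B') (g' : B' ⟶ B'') :
    𝒞.imap (𝟙 A) (g ≫ g') = 𝒞.imap (𝟙 A) g ≫ 𝒞.imap (𝟙 A) g' := by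
  rw [← 𝒞.imap_comp, Category.id_comp]

theorem imap_left_comm_right {A A' B B' : C} (f : A' ⟶ A) (g : B ⟶ B') :
    𝒞.imap f (𝟙 B) ≫ 𝒞.imap (𝟙 A') g = 𝒞.imap (𝟙 A) g ≫ 𝒞.imap f (𝟙 B') := by
  rw [← 𝒞.imap_comp, ← 𝒞.imap_comp, Category.id_comp, Category.id_comp, Category.comp_id,
    Category.comp_id]

end SkewClosedStruct

namespace ClosedFunctorStruct

variable (cF : ClosedFunctorStruct 𝒱 𝒲 F)

theorem ψ_natural_left {A A' : V} (f : A' ⟶ A) (B : V) :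
    F.map (𝒱.imap f (𝟙 B)) ≫ cF.ψ A' B = cF.ψ A B ≫ 𝒲.imap (F.map f) (𝟙 (F.obj B)) := by
  simpa using cF.ψ_natural f (𝟙 B)

theorem ψ_natural_right (A : V) {B B' : V} (g : B ⟶ B') :
    F.map (𝒱.imap (𝟙 A) g) ≫ cF.ψ A B' = cF.ψ A B ≫ 𝒲.imap (𝟙 (F.obj A)) (F.map g) := by
  simpa using cF.ψ_natural (𝟙 A) g

theorem push_EC1 (𝒜 : VCat.{v, u, w₂} V 𝒱) (A B C D : 𝒜.Obj) :
    pushL cF 𝒜 A C D ≫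
        𝒲.L (F.obj (𝒜.Hom A B)) (F.obj (𝒜.Hom A C)) (F.obj (𝒜.Hom A D)) ≫
        𝒲.imap (pushL cF 𝒜 A B C) (𝟙 (𝒲.ihom (F.obj (𝒜.Hom A B)) (F.obj (𝒜.Hom A D))))
      = pushL cF 𝒜 B C D ≫ 𝒲.imap (𝟙 (F.obj (𝒜.Hom B C))) (pushL cF 𝒜 A B D) := by
  simp only [pushL, 𝒲.imap_comp_left, 𝒲.imap_comp_right, Category.assoc]
  rw [reassoc_of% (cF.SCF3 _ _ _).symm, ← 𝒲.imap_left_comm_right,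
    ← reassoc_of% (cF.ψ_natural_left _ _), ← reassoc_of% (cF.ψ_natural_right _ _)]
  simp only [← F.map_comp_assoc, 𝒜.EC1]

theorem push_EC2 (𝒜 : VCat.{v, u, w₂} V 𝒱) (A C : 𝒜.Obj) :
    pushL cF 𝒜 A A C ≫ 𝒲.imap (pushJ cF 𝒜 A) (𝟙 (F.obj (𝒜.Hom A C))) ≫
        𝒲.i (F.obj (𝒜.Hom A C))
      = 𝟙 (F.obj (𝒜.Hom A C)) := by
  simp only [pushL, pushJ, 𝒲.imap_comp_left, Category.assoc]
  rw [← reassoc_of% (cF.ψ_natural_left _ _), cF.SCF1, ← F.map_comp, ← F.map_comp, 𝒜.EC2,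
    F.map_id]

theorem push_EC3 (𝒜 : VCat.{v, u, w₂} V 𝒱) (A B : 𝒜.Obj) :
    pushJ cF 𝒜 B ≫ pushL cF 𝒜 A B B = 𝒲.j (F.obj (𝒜.Hom A B)) := by
  rw [pushJ, pushL, Category.assoc, ← F.map_comp_assoc, 𝒜.EC3, cF.SCF2]

theorem push_EF1 {𝒜 𝒳 : VCat.{v, u, w₂} V 𝒱} (T : VFun 𝒜 𝒳) (A B C : 𝒜.Obj) :
    F.map (T.map A C) ≫ pushL cF 𝒳 (T.obj B) (T.obj A) (T.obj C) ≫
        𝒲.imap (F.map (T.map B A)) (𝟙 (F.obj (𝒳.Hom (T.obj B) (T.obj C))))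
      = pushL cF 𝒜 B A C ≫ 𝒲.imap (𝟙 (F.obj (𝒜.Hom B A))) (F.map (T.map B C)) := by
  simp only [pushL, Category.assoc]
  rw [← cF.ψ_natural_left, ← cF.ψ_natural_right]
  simp only [← F.map_comp_assoc, T.EF1]

theorem push_EF2 {𝒜 𝒳 : VCat.{v, u, w₂} V 𝒱} (T : VFun 𝒜 𝒳) (A : 𝒜.Obj) :
    pushJ cF 𝒜 A ≫ F.map (T.map A A) = pushJ cF 𝒳 (T.obj A) := by
  rw [pushJ, pushJ, Category.assoc, ← F.map_comp, T.EF2]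

end ClosedFunctorStruct

/-- (Street, "Skew-closed categories", §3, formula (10).)
A closed functor `F : 𝒱 ⟶ 𝒲` determines a functor `F₊ : 𝒱-Cat ⟶ 𝒲-Cat`: for every
`𝒱`-category `𝒜` the data `(objects of 𝒜, F𝒜(A,B), Fj∘ψ₀, ψ∘FL)` satisfy (EC1)–(EC3)
and so form a `𝒲`-category `F₊𝒜`; for every `𝒱`-functor `T` the morphisms `F(T_{A,B})`
satisfy (EF1)–(EF2) and so form a `𝒲`-functor `F₊T`; and `F₊` preserves identities and
composition of `𝒱`-functors. -/
theorem closed_functor_pushforward (cF : ClosedFunctorStruct 𝒱 𝒲 F) :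
    -- `F₊𝒜` is a `𝒲`-category
    (∀ (𝒜 : VCat.{v, u, w₂} V 𝒱) (A B C D : 𝒜.Obj),
      pushL cF 𝒜 A C D ≫
          𝒲.L (F.obj (𝒜.Hom A B)) (F.obj (𝒜.Hom A C)) (F.obj (𝒜.Hom A D)) ≫
          𝒲.imap (pushL cF 𝒜 A B C)
            (𝟙 (𝒲.ihom (F.obj (𝒜.Hom A B)) (F.obj (𝒜.Hom A D))))
        = pushL cF 𝒜 B C D ≫ 𝒲.imap (𝟙 (F.obj (𝒜.Hom B C))) (pushL cF 𝒜 A B D)) ∧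
    (∀ (𝒜 : VCat.{v, u, w₂} V 𝒱) (A C : 𝒜.Obj),
      pushL cF 𝒜 A A C ≫ 𝒲.imap (pushJ cF 𝒜 A) (𝟙 (F.obj (𝒜.Hom A C))) ≫
          𝒲.i (F.obj (𝒜.Hom A C))
        = 𝟙 (F.obj (𝒜.Hom A C))) ∧
    (∀ (𝒜 : VCat.{v, u, w₂} V 𝒱) (A B : 𝒜.Obj),
      pushJ cF 𝒜 B ≫ pushL cF 𝒜 A B B = 𝒲.j (F.obj (𝒜.Hom A B))) ∧
    -- `F₊T` is a `𝒲`-functor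
    (∀ (𝒜 𝒳 : VCat.{v, u, w₂} V 𝒱) (T : VFun 𝒜 𝒳) (A B C : 𝒜.Obj),
      F.map (T.map A C) ≫ pushL cF 𝒳 (T.obj B) (T.obj A) (T.obj C) ≫
          𝒲.imap (F.map (T.map B A)) (𝟙 (F.obj (𝒳.Hom (T.obj B) (T.obj C))))
        = pushL cF 𝒜 B A C ≫ 𝒲.imap (𝟙 (F.obj (𝒜.Hom B A))) (F.map (T.map B C))) ∧
    (∀ (𝒜 𝒳 : VCat.{v, u, w₂} V 𝒱) (T : VFun 𝒜 𝒳) (A : 𝒜.Obj),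
      pushJ cF 𝒜 A ≫ F.map (T.map A A) = pushJ cF 𝒳 (T.obj A)) ∧
    -- `F₊` preserves identity `𝒱`-functors and composites of `𝒱`-functors
    (∀ (𝒜 : VCat.{v, u, w₂} V 𝒱) (A B : 𝒜.Obj),
      F.map (𝟙 (𝒜.Hom A B)) = 𝟙 (F.obj (𝒜.Hom A B))) ∧
    (∀ (𝒜 𝒳 𝒴 : VCat.{v, u, w₂} V 𝒱) (T : VFun 𝒜 𝒳) (S : VFun 𝒳 𝒴) (A B : 𝒜.Obj),
      F.map (T.map A B ≫ S.map (T.obj A) (T.obj B))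
        = F.map (T.map A B) ≫ F.map (S.map (T.obj A) (T.obj B))) :=
  ⟨cF.push_EC1, cF.push_EC2, cF.push_EC3, fun _ _ => cF.push_EF1, fun _ _ => cF.push_EF2,
    fun _ _ _ => F.map_id _, fun _ _ _ _ _ _ _ => F.map_comp _ _⟩

end PushForward
end

section
/- Let 𝒞 be a small left skew-monoidal category. On the functor category [𝒞^op, Set] define the convolution tensor product (M∗N)C = ∫^{A,B} 𝒞(C,A⊗B) × MA × NB (a coend in Set) and the unit JC = 𝒞(C,I). Then: (i) there is a left skew-monoidal structure on [𝒞^op,Set] with tensor ∗ and unit J; (ii) the Yoneda embedding y : 𝒞 → [𝒞^op,Set] is strong monoidal for this structure, i.e. there are natural isomorphisms y(A⊗B) ≅ yA ∗ yB and yI ≅ J compatible with the associativity and unit constraints; and (iii) the structure is left closed: each functor -∗N has a right adjoint [N,-] given by [N,K]A = ∫_{B,C} [𝒞(C,A⊗B)×NB, KC] (an end in Set, square brackets denoting function sets). -/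
/-!
Every element of `(M ∗ N) C` is a generator `mk h m n` with `h : C ⟶ A ⊗ B`, and the coend
relation reads `mk (h ≫ f ⊗ g) m n = mk h (M f m) (N g n)`: morphisms can be moved between the
hom-component and the elements. Evaluated on generators, each constraint of `[𝒞ᵒᵖ, Set]` is
post-composition with the corresponding constraint of `𝒞` (for `ℓ`, an element `u : A ⟶ I` of
`J` acts on `P` through `h ≫ (u ⊗ 1) ≫ ℓ`), so after pushing all morphisms into the
hom-component each axiom becomes the same axiom in `𝒞`. The same computation with representable
`M`, `N` shows that `(h, f, g) ↦ h ≫ f ⊗ g` is an isomorphism `yA ∗ yB ≅ y(A ⊗ B)` with inverse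
`h ↦ mk h 1 1`. Left closedness is the universal property of the coend: a map `M ∗ N ⟶ K` is a
family of maps on generators, natural in `C` and compatible with the coend relation, which is
exactly an element of the end defining `[N, K]`.
-/

open CategoryTheory

universe v u w

/-- A left skew-monoidal structure on a category `C` (Szlachányi; Street,
"Skew-closed categories", §7). -/
structure SkewMonoidalStruct (C : Type u) [Category.{v} C] where
  ten : C → C → C
  tmap : ∀ {A A' B B' : C}, (A ⟶ A') → (B ⟶ B') → (ten A B ⟶ ten A' B')
  tmap_id : ∀ (A B : C), tmap (𝟙 A) (𝟙 B) = 𝟙 (ten A B)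
  tmap_comp : ∀ {A A' A'' B B' B'' : C} (f : A ⟶ A') (f' : A' ⟶ A'') (g : B ⟶ B')
      (g' : B' ⟶ B''), tmap (f ≫ f') (g ≫ g') = tmap f g ≫ tmap f' g'
  unit : C
  a : ∀ A B C' : C, ten (ten A B) C' ⟶ ten A (ten B C')
  a_natural : ∀ {A A' B B' C₁ C₁' : C} (f : A ⟶ A') (g : B ⟶ B') (h : C₁ ⟶ C₁'),
      tmap (tmap f g) h ≫ a A' B' C₁' = a A B C₁ ≫ tmap f (tmap g h)
  l : ∀ A : C, ten unit A ⟶ A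
  l_natural : ∀ {A B : C} (f : A ⟶ B), tmap (𝟙 unit) f ≫ l B = l A ≫ f
  r : ∀ A : C, A ⟶ ten A unit
  r_natural : ∀ {A B : C} (f : A ⟶ B), f ≫ r B = r A ≫ tmap f (𝟙 unit)
  M1 : ∀ A B C₁ D : C,
      tmap (a A B C₁) (𝟙 D) ≫ a A (ten B C₁) D ≫ tmap (𝟙 A) (a B C₁ D)
        = a (ten A B) C₁ D ≫ a A B (ten C₁ D)
  M2 : ∀ A B : C, tmap (r A) (𝟙 B) ≫ a A unit B ≫ tmap (𝟙 A) (l B) = 𝟙 (ten A B)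
  M3 : ∀ A B : C, a unit A B ≫ l (ten A B) = tmap (l A) (𝟙 B)
  M4 : ∀ A B : C, r (ten A B) ≫ a A B unit = tmap (𝟙 A) (r B)
  M5 : r unit ≫ l unit = 𝟙 unit

section DayConvolution

open Opposite

variable {𝒞 : Type u} [Category.{u} 𝒞] (Cm : SkewMonoidalStruct 𝒞)

/-- Index data for the coend `(M∗N)C = ∫^{A,B} 𝒞(C, A⊗B) × MA × NB`. -/
def ConvIx (M N : 𝒞ᵒᵖ ⥤ Type u) (C : 𝒞) : Type u :=
  Σ A B : 𝒞, (C ⟶ Cm.ten A B) × M.obj (op A) × N.obj (op B)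

/-- The coend identifications for `(M∗N)C`. -/
def ConvRel (M N : 𝒞ᵒᵖ ⥤ Type u) (C : 𝒞) :
    ConvIx Cm M N C → ConvIx Cm M N C → Prop := fun x y =>
  ∃ (f : x.1 ⟶ y.1) (g : x.2.1 ⟶ y.2.1),
    y.2.2.1 = x.2.2.1 ≫ Cm.tmap f g ∧
    x.2.2.2.1 = M.map f.op y.2.2.2.1 ∧
    x.2.2.2.2 = N.map g.op y.2.2.2.2

/-- The convolution tensor product `(M∗N)C = ∫^{A,B} 𝒞(C, A⊗B) × MA × NB`. -/
def Conv (M N : 𝒞ᵒᵖ ⥤ Type u) : 𝒞ᵒᵖ ⥤ Type u where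
  obj C := Quot (ConvRel Cm M N C.unop)
  map {C D} φ := TypeCat.ofHom <| Quot.map
    (fun x => ⟨x.1, x.2.1, φ.unop ≫ x.2.2.1, x.2.2.2⟩)
    (by rintro ⟨A, B, h, m, n⟩ ⟨A', B', h', m', n'⟩ ⟨f, g, e1, e2, e3⟩
        dsimp only at e1 e2 e3 ⊢
        exact ⟨f, g, by rw [e1, Category.assoc], e2, e3⟩)
  map_id C := by
    ext q
    induction q using Quot.ind with
    | _ x =>
      obtain ⟨A, B, h, m, n⟩ := x
      exact congrArg (Quot.mk _) (by simp; rfl)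
  map_comp {C D E'} φ ψ := by
    ext q
    induction q using Quot.ind with
    | _ x =>
      obtain ⟨A, B, h, m, n⟩ := x
      exact congrArg (Quot.mk _) (by simp; rfl)

/-- Functoriality of the convolution product in both arguments. -/
def ConvMap {M M' N N' : 𝒞ᵒᵖ ⥤ Type u} (α : M ⟶ M') (β : N ⟶ N') :
    _root_.Conv Cm M N ⟶ _root_.Conv Cm M' N' where
  app C := TypeCat.ofHom <| Quot.map
    (fun x => ⟨x.1, x.2.1, x.2.2.1, α.app (op x.1) x.2.2.2.1, β.app (op x.2.1) x.2.2.2.2⟩)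
    (by rintro ⟨A, B, h, m, n⟩ ⟨A', B', h', m', n'⟩ ⟨f, g, e1, e2, e3⟩
        dsimp only at e1 e2 e3 ⊢
        refine ⟨f, g, e1, ?_, ?_⟩
        · rw [e2]; exact (NatTrans.naturality_apply α f.op m')
        · rw [e3]; exact (NatTrans.naturality_apply β g.op n'))
  naturality {C D} φ := by
    ext q
    induction q using Quot.ind with
    | _ x => rfl

/-- The functor `- ∗ N`. -/
def ConvLeft (N : 𝒞ᵒᵖ ⥤ Type u) : (𝒞ᵒᵖ ⥤ Type u) ⥤ (𝒞ᵒᵖ ⥤ Type u) where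
  obj M := _root_.Conv Cm M N
  map α := ConvMap Cm α (𝟙 N)
  map_id M := by
    ext C q
    induction q using Quot.ind with
    | _ x => rfl
  map_comp α β := by
    ext C q
    induction q using Quot.ind with
    | _ x => rfl

/-- The internal hom `[N,K]A = ∫_{B,C} [𝒞(C,A⊗B) × NB, KC]` of the convolution
structure. -/
def ConvHomObj (N K : 𝒞ᵒᵖ ⥤ Type u) : 𝒞ᵒᵖ ⥤ Type u where
  obj A := { x : ∀ (B C : 𝒞), (C ⟶ Cm.ten A.unop B) → N.obj (op B) → K.obj (op C) //
      (∀ (B C C' : 𝒞) (g : C' ⟶ C) (h : C ⟶ Cm.ten A.unop B) (n : N.obj (op B)),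
        x B C' (g ≫ h) n = K.map g.op (x B C h n)) ∧
      (∀ (B B' C : 𝒞) (f : B ⟶ B') (h : C ⟶ Cm.ten A.unop B) (n' : N.obj (op B')),
        x B' C (h ≫ Cm.tmap (𝟙 A.unop) f) n' = x B C h (N.map f.op n')) }
  map {A A'} u := TypeCat.ofHom fun x => ⟨fun B C h n => x.1 B C (h ≫ Cm.tmap u.unop (𝟙 B)) n, by
    constructor
    · intro B C C' g h n
      dsimp only
      rw [Category.assoc]
      exact x.2.1 B C C' g (h ≫ Cm.tmap u.unop (𝟙 B)) n
    · intro B B' C f h n'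
      dsimp only
      have key : (h ≫ Cm.tmap (𝟙 A'.unop) f) ≫ Cm.tmap u.unop (𝟙 B')
          = (h ≫ Cm.tmap u.unop (𝟙 B)) ≫ Cm.tmap (𝟙 A.unop) f := by
        rw [Category.assoc, Category.assoc, ← Cm.tmap_comp, ← Cm.tmap_comp]
        simp
      rw [key]
      exact x.2.2 B B' C f (h ≫ Cm.tmap u.unop (𝟙 B)) n'⟩
  map_id A := by
    ext x : 3
    apply Subtype.ext
    funext B C h n
    simp [Cm.tmap_id]
  map_comp {A A' A''} u v := by
    ext x : 3
    apply Subtype.ext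
    funext B C h n
    show x.1 B C (h ≫ Cm.tmap (u ≫ v).unop (𝟙 B)) n
        = x.1 B C ((h ≫ Cm.tmap v.unop (𝟙 B)) ≫ Cm.tmap u.unop (𝟙 B)) n
    rw [Category.assoc, ← Cm.tmap_comp]
    simp


namespace SkewMonoidalStruct

@[simp]
theorem tmap_comp_tmap {A A' A'' B B' B'' : 𝒞} (f : A ⟶ A') (f' : A' ⟶ A'') (g : B ⟶ B')
    (g' : B' ⟶ B'') : Cm.tmap f g ≫ Cm.tmap f' g' = Cm.tmap (f ≫ f') (g ≫ g') :=
  (Cm.tmap_comp f f' g g').symm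

@[simp]
theorem tmap_comp_tmap_assoc {A A' A'' B B' B'' X : 𝒞} (f : A ⟶ A') (f' : A' ⟶ A'')
    (g : B ⟶ B') (g' : B' ⟶ B'') (k : Cm.ten A'' B'' ⟶ X) :
    Cm.tmap f g ≫ Cm.tmap f' g' ≫ k = Cm.tmap (f ≫ f') (g ≫ g') ≫ k := by
  rw [← Category.assoc, tmap_comp_tmap]

theorem tmap_comp_id {A A' A'' : 𝒞} (f : A ⟶ A') (f' : A' ⟶ A'') (B : 𝒞) :
    Cm.tmap (f ≫ f') (𝟙 B) = Cm.tmap f (𝟙 B) ≫ Cm.tmap f' (𝟙 B) := by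
  simp

theorem a_natural_assoc {A A' B B' C C' X : 𝒞} (f : A ⟶ A') (g : B ⟶ B') (h : C ⟶ C')
    (k : Cm.ten A' (Cm.ten B' C') ⟶ X) :
    Cm.tmap (Cm.tmap f g) h ≫ Cm.a A' B' C' ≫ k = Cm.a A B C ≫ Cm.tmap f (Cm.tmap g h) ≫ k := by
  rw [← Category.assoc, Cm.a_natural, Category.assoc]

end SkewMonoidalStruct

attribute [local simp] SkewMonoidalStruct.tmap_id

namespace Conv

variable {M N P Q R : 𝒞ᵒᵖ ⥤ Type u}

def mk {C A B : 𝒞} (h : C ⟶ Cm.ten A B) (m : M.obj (op A)) (n : N.obj (op B)) :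
    (Conv Cm M N).obj (op C) :=
  Quot.mk _ ⟨A, B, h, m, n⟩

@[elab_as_elim]
theorem ind {C : 𝒞ᵒᵖ} {motive : (Conv Cm M N).obj C → Prop}
    (mk : ∀ {A B : 𝒞} (h : C.unop ⟶ Cm.ten A B) (m : M.obj (op A)) (n : N.obj (op B)),
      motive (mk Cm h m n))
    (x : (Conv Cm M N).obj C) : motive x :=
  Quot.ind (fun ⟨_, _, h, m, n⟩ => mk h m n) x

theorem hom_ext {K : 𝒞ᵒᵖ ⥤ Type u} {α β : Conv Cm M N ⟶ K}
    (w : ∀ {C A B : 𝒞} (h : C ⟶ Cm.ten A B) (m : M.obj (op A)) (n : N.obj (op B)),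
      α.app (op C) (mk Cm h m n) = β.app (op C) (mk Cm h m n)) : α = β :=
  NatTrans.ext <| funext fun C => ConcreteCategory.hom_ext _ _ fun x => by
    induction x using ind with
    | mk h m n => exact w h m n

theorem mk_comp_tmap {C A A' B B' : 𝒞} (h : C ⟶ Cm.ten A B) (f : A ⟶ A') (g : B ⟶ B')
    (m : M.obj (op A')) (n : N.obj (op B')) :
    mk Cm (h ≫ Cm.tmap f g) m n = mk Cm h (M.map f.op m) (N.map g.op n) :=
  (Quot.sound ⟨f, g, rfl, rfl, rfl⟩).symm

theorem mk_tmap_id_left {C A A' B : 𝒞} (h : C ⟶ Cm.ten A B) (f : A ⟶ A')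
    (m : M.obj (op A')) (n : N.obj (op B)) :
    mk Cm (h ≫ Cm.tmap f (𝟙 B)) m n = mk Cm h (M.map f.op m) n := by
  simp [mk_comp_tmap]

theorem mk_tmap_id_right {C A B B' : 𝒞} (h : C ⟶ Cm.ten A B) (g : B ⟶ B')
    (m : M.obj (op A)) (n : N.obj (op B')) :
    mk Cm (h ≫ Cm.tmap (𝟙 A) g) m n = mk Cm h m (N.map g.op n) := by
  simp [mk_comp_tmap]

@[simp]
theorem map_mk {C C' A B : 𝒞} (φ : C' ⟶ C) (h : C ⟶ Cm.ten A B) (m : M.obj (op A))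
    (n : N.obj (op B)) : (Conv Cm M N).map φ.op (mk Cm h m n) = mk Cm (φ ≫ h) m n :=
  rfl

theorem mk_mk_right {C A X B D : 𝒞} (H : C ⟶ Cm.ten A X) (φ : X ⟶ Cm.ten B D)
    (p : P.obj (op A)) (q : Q.obj (op B)) (r : R.obj (op D)) :
    mk Cm H p (mk Cm φ q r) = mk Cm (H ≫ Cm.tmap (𝟙 A) φ) p (mk Cm (𝟙 _) q r) := by
  rw [mk_tmap_id_right, map_mk, Category.comp_id]

@[simp]
theorem convMap_app_mk {M' N' : 𝒞ᵒᵖ ⥤ Type u} (α : M ⟶ M') (β : N ⟶ N') {C A B : 𝒞}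
    (h : C ⟶ Cm.ten A B) (m : M.obj (op A)) (n : N.obj (op B)) :
    (ConvMap Cm α β).app (op C) (mk Cm h m n) = mk Cm h (α.app _ m) (β.app _ n) :=
  rfl

def lift {C : 𝒞} {X : Sort*}
    (F : ∀ {A B : 𝒞}, (C ⟶ Cm.ten A B) → M.obj (op A) → N.obj (op B) → X)
    (hF : ∀ {A A' B B' : 𝒞} (h : C ⟶ Cm.ten A B) (f : A ⟶ A') (g : B ⟶ B')
      (m : M.obj (op A')) (n : N.obj (op B')),
      F (h ≫ Cm.tmap f g) m n = F h (M.map f.op m) (N.map g.op n)) :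
    (Conv Cm M N).obj (op C) → X :=
  Quot.lift (fun x => F x.2.2.1 x.2.2.2.1 x.2.2.2.2) <| by
    rintro ⟨A, B, h, m₀, n₀⟩ ⟨A', B', h', m, n⟩ ⟨f, g, e₁, e₂, e₃⟩
    dsimp only at f g e₁ e₂ e₃ ⊢
    subst h'
    rw [e₂, e₃]
    exact (hF h f g m n).symm

def desc {K : 𝒞ᵒᵖ ⥤ Type u}
    (F : ∀ {C A B : 𝒞}, (C ⟶ Cm.ten A B) → M.obj (op A) → N.obj (op B) → K.obj (op C))
    (hF : ∀ {C A A' B B' : 𝒞} (h : C ⟶ Cm.ten A B) (f : A ⟶ A') (g : B ⟶ B')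
      (m : M.obj (op A')) (n : N.obj (op B')),
      F (h ≫ Cm.tmap f g) m n = F h (M.map f.op m) (N.map g.op n))
    (hnat : ∀ {C C' A B : 𝒞} (φ : C' ⟶ C) (h : C ⟶ Cm.ten A B) (m : M.obj (op A))
      (n : N.obj (op B)), F (φ ≫ h) m n = K.map φ.op (F h m n)) :
    Conv Cm M N ⟶ K where
  app C := TypeCat.ofHom (lift Cm F hF)
  naturality C C' φ := by
    ext x
    induction x using ind with
    | mk h m n => exact hnat φ.unop h m n

def assocLift {C X B : 𝒞} (h : C ⟶ Cm.ten X B) (r : R.obj (op B)) :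
    (Conv Cm P Q).obj (op X) → (Conv Cm P (Conv Cm Q R)).obj (op C) :=
  lift Cm (fun k p q => mk Cm (h ≫ Cm.tmap k (𝟙 B) ≫ Cm.a _ _ B) p (mk Cm (𝟙 _) q r)) <| by
    intro A A' B' B'' k f g p q
    calc mk Cm (h ≫ Cm.tmap (k ≫ Cm.tmap f g) (𝟙 B) ≫ Cm.a A' B'' B) p (mk Cm (𝟙 _) q r)
        = mk Cm ((h ≫ Cm.tmap k (𝟙 B) ≫ Cm.a A B' B) ≫ Cm.tmap f (Cm.tmap g (𝟙 B))) p
            (mk Cm (𝟙 _) q r) := by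
          rw [Cm.tmap_comp_id, Category.assoc, Category.assoc, Category.assoc, Cm.a_natural]
      _ = mk Cm (h ≫ Cm.tmap k (𝟙 B) ≫ Cm.a A B' B) (P.map f.op p)
            (mk Cm (𝟙 _) (Q.map g.op q) r) := by
          rw [mk_comp_tmap, map_mk, Category.comp_id, ← Category.id_comp (Cm.tmap g _),
            mk_tmap_id_left]

@[simp]
theorem assocLift_mk {C X B A B' : 𝒞} (h : C ⟶ Cm.ten X B) (r : R.obj (op B))
    (k : X ⟶ Cm.ten A B') (p : P.obj (op A)) (q : Q.obj (op B')) :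
    assocLift Cm h r (mk Cm k p q)
      = mk Cm (h ≫ Cm.tmap k (𝟙 B) ≫ Cm.a _ _ B) p (mk Cm (𝟙 _) q r) :=
  rfl

def assoc (P Q R : 𝒞ᵒᵖ ⥤ Type u) : Conv Cm (Conv Cm P Q) R ⟶ Conv Cm P (Conv Cm Q R) :=
  desc Cm (fun h x r => assocLift Cm h r x)
    (by
      intro C X X' B B' h f g x r
      induction x using ind with
      | mk k p q =>
        rw [map_mk, assocLift_mk, assocLift_mk, ← mk_tmap_id_right, Category.id_comp]
        conv_rhs => rw [mk_mk_right]
        congr 1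
        simp only [Category.assoc]
        rw [← Cm.a_natural]
        simp)
    (by
      intro C C' X B φ h x r
      induction x using ind with
      | mk k p q => simp)

@[simp]
theorem assoc_app_mk {C X B : 𝒞} (h : C ⟶ Cm.ten X B) (x : (Conv Cm P Q).obj (op X))
    (r : R.obj (op B)) : (assoc Cm P Q R).app (op C) (mk Cm h x r) = assocLift Cm h r x :=
  rfl

def leftUnitor (P : 𝒞ᵒᵖ ⥤ Type u) : Conv Cm (yoneda.obj Cm.unit) P ⟶ P :=
  desc Cm (fun h u p => P.map (h ≫ Cm.tmap u (𝟙 _) ≫ Cm.l _).op p)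
    (by
      intro C A A' B B' h f g u p
      have key : (h ≫ Cm.tmap f g) ≫ Cm.tmap u (𝟙 B') ≫ Cm.l B'
          = (h ≫ Cm.tmap (f ≫ u) (𝟙 B) ≫ Cm.l B) ≫ g := by
        simp only [Category.assoc]
        rw [← Cm.l_natural]
        simp
      rw [← Functor.map_comp_apply, ← op_comp, key]
      rfl)
    (by intros; simp)

def rightUnitor (P : 𝒞ᵒᵖ ⥤ Type u) : P ⟶ Conv Cm P (yoneda.obj Cm.unit) where
  app C := TypeCat.ofHom fun p => mk Cm (Cm.r C.unop) p (𝟙 Cm.unit)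
  naturality C C' φ := by
    ext p
    change mk Cm _ _ _ = mk Cm (N := yoneda.obj Cm.unit) (φ.unop ≫ Cm.r C.unop) p (𝟙 Cm.unit)
    rw [Cm.r_natural, mk_tmap_id_left]
    rfl

def yonedaTensorIso (A B : 𝒞) :
    Conv Cm (yoneda.obj A) (yoneda.obj B) ≅ yoneda.obj (Cm.ten A B) where
  hom := desc Cm (fun h f g => h ≫ Cm.tmap f g) (by intros; simp) (by intros; simp)
  inv.app C := TypeCat.ofHom fun h => mk Cm h (𝟙 A) (𝟙 B)
  hom_inv_id := by
    refine hom_ext Cm fun h f g => ?_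
    change mk Cm (h ≫ Cm.tmap f g) (𝟙 A) (𝟙 B) = mk Cm h f g
    rw [mk_comp_tmap]
    simp
  inv_hom_id := by
    ext C h
    change h ≫ Cm.tmap (𝟙 A) (𝟙 B) = h
    simp

theorem assoc_naturality {P' Q' R' : 𝒞ᵒᵖ ⥤ Type u} (α : P ⟶ P') (β : Q ⟶ Q') (γ : R ⟶ R') :
    ConvMap Cm (ConvMap Cm α β) γ ≫ assoc Cm P' Q' R'
      = assoc Cm P Q R ≫ ConvMap Cm α (ConvMap Cm β γ) := by
  refine hom_ext Cm fun h x r => ?_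
  induction x using ind with
  | mk k p q => rfl

theorem leftUnitor_naturality {P' : 𝒞ᵒᵖ ⥤ Type u} (α : P ⟶ P') :
    ConvMap Cm (𝟙 (yoneda.obj Cm.unit)) α ≫ leftUnitor Cm P' = leftUnitor Cm P ≫ α :=
  hom_ext Cm fun _ _ p => (NatTrans.naturality_apply α _ p).symm

theorem rightUnitor_naturality {P' : 𝒞ᵒᵖ ⥤ Type u} (α : P ⟶ P') :
    α ≫ rightUnitor Cm P' = rightUnitor Cm P ≫ ConvMap Cm α (𝟙 (yoneda.obj Cm.unit)) :=
  rfl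

theorem pentagon (S : 𝒞ᵒᵖ ⥤ Type u) :
    ConvMap Cm (assoc Cm P Q R) (𝟙 S) ≫ assoc Cm P (Conv Cm Q R) S ≫
        ConvMap Cm (𝟙 P) (assoc Cm Q R S)
      = assoc Cm (Conv Cm P Q) R S ≫ assoc Cm P Q (Conv Cm R S) := by
  refine hom_ext Cm fun h x s => ?_
  induction x using ind with
  | mk k x r =>
    induction x using ind with
    | mk m p q =>
      simp only [NatTrans.comp_app_apply, convMap_app_mk, assoc_app_mk, assocLift_mk,
        NatTrans.id_app, types_id_apply, Category.id_comp, Cm.tmap_id]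
      rw [mk_mk_right]
      congr 1
      simp only [Cm.tmap_comp_id, Category.assoc]
      rw [Cm.M1, Cm.a_natural_assoc]
      simp

theorem triangle :
    ConvMap Cm (rightUnitor Cm P) (𝟙 Q) ≫ assoc Cm P (yoneda.obj Cm.unit) Q ≫
        ConvMap Cm (𝟙 P) (leftUnitor Cm Q)
      = 𝟙 (Conv Cm P Q) := by
  refine hom_ext Cm fun h p q => ?_
  change mk Cm (h ≫ Cm.tmap (Cm.r _) (𝟙 _) ≫ Cm.a _ _ _) p
    (Q.map (𝟙 _ ≫ Cm.tmap (𝟙 _) (𝟙 _) ≫ Cm.l _).op q) = mk Cm h p q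
  rw [Cm.tmap_id, Category.id_comp, Category.id_comp, ← mk_tmap_id_right]
  simp only [Category.assoc, Cm.M2, Category.comp_id]

theorem assoc_leftUnitor :
    assoc Cm (yoneda.obj Cm.unit) P Q ≫ leftUnitor Cm (Conv Cm P Q)
      = ConvMap Cm (leftUnitor Cm P) (𝟙 Q) := by
  refine hom_ext Cm fun h x q => ?_
  induction x using ind with
  | mk k u p =>
    change mk Cm (((h ≫ Cm.tmap k (𝟙 _) ≫ Cm.a _ _ _) ≫ Cm.tmap u (𝟙 _) ≫ Cm.l _) ≫ 𝟙 _) p q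
      = mk Cm h (P.map (k ≫ Cm.tmap u (𝟙 _) ≫ Cm.l _).op p) q
    rw [← mk_tmap_id_left, Cm.tmap_comp_id, Cm.tmap_comp_id, ← Cm.M3, Cm.a_natural_assoc]
    simp

theorem rightUnitor_assoc :
    rightUnitor Cm (Conv Cm P Q) ≫ assoc Cm P Q (yoneda.obj Cm.unit)
      = ConvMap Cm (𝟙 P) (rightUnitor Cm Q) := by
  refine hom_ext Cm fun h p q => ?_
  change mk Cm (Cm.r _ ≫ Cm.tmap h (𝟙 _) ≫ Cm.a _ _ _) p
      (mk Cm (N := yoneda.obj Cm.unit) (𝟙 _) q (𝟙 Cm.unit))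
    = mk Cm h p (mk Cm (N := yoneda.obj Cm.unit) (Cm.r _) q (𝟙 Cm.unit))
  conv_rhs => rw [mk_mk_right]
  rw [← Category.assoc, ← Cm.r_natural, Category.assoc, Cm.M4]

theorem rightUnitor_leftUnitor :
    rightUnitor Cm (yoneda.obj Cm.unit) ≫ leftUnitor Cm (yoneda.obj Cm.unit)
      = 𝟙 (yoneda.obj Cm.unit) := by
  ext C u
  change (Cm.r C.unop ≫ Cm.tmap u (𝟙 Cm.unit) ≫ Cm.l Cm.unit) ≫ 𝟙 Cm.unit = u
  rw [Category.comp_id, ← Category.assoc, ← Cm.r_natural, Category.assoc, Cm.M5,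
    Category.comp_id]

theorem yonedaTensorIso_hom_naturality {A A' B B' : 𝒞} (f : A ⟶ A') (g : B ⟶ B') :
    ConvMap Cm (yoneda.map f) (yoneda.map g) ≫ (yonedaTensorIso Cm A' B').hom
      = (yonedaTensorIso Cm A B).hom ≫ yoneda.map (Cm.tmap f g) := by
  refine hom_ext Cm fun h k m => ?_
  change h ≫ Cm.tmap (k ≫ f) (m ≫ g) = (h ≫ Cm.tmap k m) ≫ Cm.tmap f g
  simp

theorem assoc_yonedaTensorIso (A B C : 𝒞) :
    assoc Cm (yoneda.obj A) (yoneda.obj B) (yoneda.obj C) ≫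
        ConvMap Cm (𝟙 (yoneda.obj A)) (yonedaTensorIso Cm B C).hom ≫
          (yonedaTensorIso Cm A (Cm.ten B C)).hom
      = ConvMap Cm (yonedaTensorIso Cm A B).hom (𝟙 (yoneda.obj C)) ≫
          (yonedaTensorIso Cm (Cm.ten A B) C).hom ≫ yoneda.map (Cm.a A B C) := by
  refine hom_ext Cm fun h x c => ?_
  induction x using ind with
  | mk k f g =>
    change (h ≫ Cm.tmap k (𝟙 _) ≫ Cm.a _ _ _) ≫ Cm.tmap f (𝟙 _ ≫ Cm.tmap g c)
      = (h ≫ Cm.tmap (k ≫ Cm.tmap f g) c) ≫ Cm.a A B C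
    rw [Category.assoc, Category.assoc, Category.assoc, Category.id_comp, ← Cm.a_natural]
    simp

theorem yonedaTensorIso_leftUnitor (A : 𝒞) :
    (yonedaTensorIso Cm Cm.unit A).hom ≫ yoneda.map (Cm.l A)
      = leftUnitor Cm (yoneda.obj A) := by
  refine hom_ext Cm fun h u k => ?_
  change (h ≫ Cm.tmap u k) ≫ Cm.l A = (h ≫ Cm.tmap u (𝟙 _) ≫ Cm.l _) ≫ k
  rw [Category.assoc, Category.assoc, Category.assoc, ← Cm.l_natural]
  simp

theorem rightUnitor_yonedaTensorIso (A : 𝒞) :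
    rightUnitor Cm (yoneda.obj A) ≫ (yonedaTensorIso Cm A Cm.unit).hom
      = yoneda.map (Cm.r A) := by
  ext C k
  exact (Cm.r_natural k).symm

variable (N)

def ihom : (𝒞ᵒᵖ ⥤ Type u) ⥤ (𝒞ᵒᵖ ⥤ Type u) where
  obj K := ConvHomObj Cm N K
  map γ :=
    { app A := TypeCat.ofHom fun x => ⟨fun B C h n => γ.app (op C) (x.1 B C h n), by
        refine ⟨fun B C C' g h n => ?_, fun B B' C f h n' => ?_⟩
        · dsimp only
          rw [x.2.1 B C C' g h n]
          exact NatTrans.naturality_apply γ g.op _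
        · dsimp only
          rw [x.2.2 B B' C f h n']⟩ }

def curry {K : 𝒞ᵒᵖ ⥤ Type u} (α : Conv Cm M N ⟶ K) : M ⟶ ConvHomObj Cm N K where
  app A := TypeCat.ofHom fun m => ⟨fun B C h n => α.app (op C) (mk Cm h m n), by
    refine ⟨fun B C C' g h n => ?_, fun B B' C f h n' => ?_⟩
    · exact NatTrans.naturality_apply α g.op (mk Cm h m n)
    · dsimp only
      rw [mk_tmap_id_right]⟩
  naturality A A' u := by
    ext m : 3
    refine Subtype.ext (funext fun B => funext fun C => funext fun h => funext fun n => ?_)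
    change _ = α.app (op C) (mk Cm (h ≫ Cm.tmap u.unop (𝟙 B)) m n)
    rw [mk_tmap_id_left]
    rfl

def uncurry {K : 𝒞ᵒᵖ ⥤ Type u} (β : M ⟶ ConvHomObj Cm N K) : Conv Cm M N ⟶ K :=
  desc Cm (fun h m n => (β.app (op _) m).1 _ _ h n)
    (by
      intro C A A' B B' h f g m n
      rw [NatTrans.naturality_apply β f.op m]
      refine Eq.trans ?_ ((β.app _ m).2.2 B B' C g (h ≫ Cm.tmap f (𝟙 B)) n)
      simp)
    (fun φ h m n => (β.app _ m).2.1 _ _ _ φ h n)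

def adjunction : ConvLeft Cm N ⊣ ihom Cm N :=
  Adjunction.mkOfHomEquiv
    { homEquiv M K :=
        { toFun := curry Cm N
          invFun := uncurry Cm N
          left_inv α := hom_ext Cm fun _ _ _ => rfl
          right_inv β := by
            ext A m
            exact Subtype.ext rfl }
      homEquiv_naturality_left_symm f g := hom_ext Cm fun _ _ _ => rfl
      homEquiv_naturality_right f g := by
        ext A m
        exact Subtype.ext rfl }

end Conv

/-- (Street, "Skew-closed categories", §10.)
For a small left skew-monoidal category `𝒞`, the convolution tensor product
`(M∗N)C = ∫^{A,B} 𝒞(C,A⊗B) × MA × NB` with unit `J = 𝒞(-,I)` gives: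
(i) a left skew-monoidal structure on `[𝒞ᵒᵖ, Set]`;
(ii) the Yoneda embedding is strong monoidal for it (via isomorphisms
`yA ∗ yB ≅ y(A⊗B)` and `yI = J` compatible with the constraints); and
(iii) the structure is left closed: each `-∗N` has a right adjoint `[N,-]` with
`[N,K]A = ∫_{B,C} [𝒞(C,A⊗B) × NB, KC]`. -/
theorem day_convolution_skew_monoidal :
    ∃ (aC : ∀ P Q R : 𝒞ᵒᵖ ⥤ Type u,
        _root_.Conv Cm (_root_.Conv Cm P Q) R ⟶ _root_.Conv Cm P (_root_.Conv Cm Q R))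
      (lC : ∀ P : 𝒞ᵒᵖ ⥤ Type u, _root_.Conv Cm (yoneda.obj Cm.unit) P ⟶ P)
      (rC : ∀ P : 𝒞ᵒᵖ ⥤ Type u, P ⟶ _root_.Conv Cm P (yoneda.obj Cm.unit)),
      -- naturality of the constraints
      (∀ (P P' Q Q' R R' : 𝒞ᵒᵖ ⥤ Type u) (α : P ⟶ P') (β : Q ⟶ Q') (γ : R ⟶ R'),
        ConvMap Cm (ConvMap Cm α β) γ ≫ aC P' Q' R'
          = aC P Q R ≫ ConvMap Cm α (ConvMap Cm β γ)) ∧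
      (∀ (P P' : 𝒞ᵒᵖ ⥤ Type u) (α : P ⟶ P'),
        ConvMap Cm (𝟙 (yoneda.obj Cm.unit)) α ≫ lC P' = lC P ≫ α) ∧
      (∀ (P P' : 𝒞ᵒᵖ ⥤ Type u) (α : P ⟶ P'),
        α ≫ rC P' = rC P ≫ ConvMap Cm α (𝟙 (yoneda.obj Cm.unit))) ∧
      -- the five left skew-monoidal axioms
      (∀ P Q R S : 𝒞ᵒᵖ ⥤ Type u,
        ConvMap Cm (aC P Q R) (𝟙 S) ≫ aC P (_root_.Conv Cm Q R) S ≫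
            ConvMap Cm (𝟙 P) (aC Q R S)
          = aC (_root_.Conv Cm P Q) R S ≫ aC P Q (_root_.Conv Cm R S)) ∧
      (∀ P Q : 𝒞ᵒᵖ ⥤ Type u,
        ConvMap Cm (rC P) (𝟙 Q) ≫ aC P (yoneda.obj Cm.unit) Q ≫
            ConvMap Cm (𝟙 P) (lC Q)
          = 𝟙 (_root_.Conv Cm P Q)) ∧
      (∀ P Q : 𝒞ᵒᵖ ⥤ Type u,
        aC (yoneda.obj Cm.unit) P Q ≫ lC (_root_.Conv Cm P Q) = ConvMap Cm (lC P) (𝟙 Q)) ∧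
      (∀ P Q : 𝒞ᵒᵖ ⥤ Type u,
        rC (_root_.Conv Cm P Q) ≫ aC P Q (yoneda.obj Cm.unit) = ConvMap Cm (𝟙 P) (rC Q)) ∧
      (rC (yoneda.obj Cm.unit) ≫ lC (yoneda.obj Cm.unit) = 𝟙 (yoneda.obj Cm.unit)) ∧
      -- (ii) the Yoneda embedding is strong monoidal
      (∃ μ : ∀ A B : 𝒞, _root_.Conv Cm (yoneda.obj A) (yoneda.obj B) ≅ yoneda.obj (Cm.ten A B),
        (∀ (A A' B B' : 𝒞) (f : A ⟶ A') (g : B ⟶ B'),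
          ConvMap Cm (yoneda.map f) (yoneda.map g) ≫ (μ A' B').hom
            = (μ A B).hom ≫ yoneda.map (Cm.tmap f g)) ∧
        (∀ A B C : 𝒞,
          aC (yoneda.obj A) (yoneda.obj B) (yoneda.obj C) ≫
              ConvMap Cm (𝟙 (yoneda.obj A)) (μ B C).hom ≫ (μ A (Cm.ten B C)).hom
            = ConvMap Cm (μ A B).hom (𝟙 (yoneda.obj C)) ≫ (μ (Cm.ten A B) C).hom ≫
                yoneda.map (Cm.a A B C)) ∧
        (∀ A : 𝒞, (μ Cm.unit A).hom ≫ yoneda.map (Cm.l A) = lC (yoneda.obj A)) ∧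
        (∀ A : 𝒞, rC (yoneda.obj A) ≫ (μ A Cm.unit).hom = yoneda.map (Cm.r A))) ∧
      -- (iii) the structure is left closed, with internal hom given by the end formula
      (∀ N : 𝒞ᵒᵖ ⥤ Type u, ∃ G : (𝒞ᵒᵖ ⥤ Type u) ⥤ (𝒞ᵒᵖ ⥤ Type u),
        (∀ K : 𝒞ᵒᵖ ⥤ Type u, G.obj K = ConvHomObj Cm N K) ∧
        Nonempty (ConvLeft Cm N ⊣ G)) := by
  refine ⟨Conv.assoc Cm, Conv.leftUnitor Cm, Conv.rightUnitor Cm,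
    fun _ _ _ _ _ _ => Conv.assoc_naturality Cm, fun _ _ => Conv.leftUnitor_naturality Cm,
    fun _ _ => Conv.rightUnitor_naturality Cm, fun _ _ _ => Conv.pentagon Cm,
    fun _ _ => Conv.triangle Cm, fun _ _ => Conv.assoc_leftUnitor Cm,
    fun _ _ => Conv.rightUnitor_assoc Cm, Conv.rightUnitor_leftUnitor Cm,
    ⟨Conv.yonedaTensorIso Cm, fun _ _ _ _ => Conv.yonedaTensorIso_hom_naturality Cm,
      Conv.assoc_yonedaTensorIso Cm, Conv.yonedaTensorIso_leftUnitor Cm,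
      Conv.rightUnitor_yonedaTensorIso Cm⟩,
    fun N => ⟨Conv.ihom Cm N, fun _ => rfl, ⟨Conv.adjunction Cm N⟩⟩⟩

end DayConvolution
end

section
/- Let 𝒱 be a small left skew-closed category. On the functor category [𝒱,Set] define (M∗N)C = ∫^B M[B,C] × NB (a coend in Set) and JC = 𝒱(I,C). Define: ℓ_M : M → J∗M with component at C sending m ∈ MC to the class of (j_C, m) ∈ 𝒱(I,[C,C]) × MC; r_M : M∗J → M as the composite of the co-Yoneda isomorphism (M∗J)C = ∫^B M[B,C] × 𝒱(I,B) ≅ M[I,C] with M(i_C); and a : M∗(N∗K) → (M∗N)∗K induced by sending (m,n,k) ∈ M[B,C] × N[E,B] × KE to the class of ((M(L^E_{B,C}))(m), n, k) ∈ M[[E,B],[E,C]] × N[E,B] × KE. Then (∗, J, a, ℓ, r) is a right skew-monoidal structure on [𝒱,Set], and it is closed: each functor M∗- has a right adjoint [M,-] given by [M,K]B = ∫_C [M[B,C], KC] (an end in Set, square brackets denoting function sets). -/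
open CategoryTheory

universe v u w

section ConvTwo

open Opposite

variable {𝒱 : Type u} [Category.{u} 𝒱] (Vs : SkewClosedStruct 𝒱)

/-- Index data for the coend `(M∗N)C = ∫^B M[B,C] × NB`. -/
def Conv2Ix (M N : 𝒱 ⥤ Type u) (C : 𝒱) : Type u :=
  Σ B : 𝒱, M.obj (Vs.ihom B C) × N.obj B

/-- The coend identifications for `(M∗N)C`. -/
def Conv2Rel (M N : 𝒱 ⥤ Type u) (C : 𝒱) :
    Conv2Ix Vs M N C → Conv2Ix Vs M N C → Prop := fun x y =>
  ∃ f : x.1 ⟶ y.1,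
    x.2.1 = M.map (Vs.imap f (𝟙 C)) y.2.1 ∧ y.2.2 = N.map f x.2.2

/-- The convolution product `(M∗N)C = ∫^B M[B,C] × NB` on `[𝒱, Set]`. -/
def Conv2 (M N : 𝒱 ⥤ Type u) : 𝒱 ⥤ Type u where
  obj C := Quot (Conv2Rel Vs M N C)
  map {C C'} g := TypeCat.ofHom (Quot.map
    (fun x => ⟨x.1, M.map (Vs.imap (𝟙 x.1) g) x.2.1, x.2.2⟩)
    (by rintro ⟨B, m, n⟩ ⟨B', m', n'⟩ ⟨f, e1, e2⟩
        dsimp only at e1 e2 ⊢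
        refine ⟨f, ?_, e2⟩
        rw [e1, ← FunctorToTypes.map_comp_apply, ← FunctorToTypes.map_comp_apply,
          ← Vs.imap_comp, ← Vs.imap_comp]
        simp))
  map_id C := by
    ext q
    induction q using Quot.ind with
    | _ x =>
      obtain ⟨B, m, n⟩ := x
      exact congrArg (Quot.mk _) (by simp [Vs.imap_id]; rfl)
  map_comp {C C' C''} g g' := by
    ext q
    induction q using Quot.ind with
    | _ x =>
      obtain ⟨B, m, n⟩ := x
      refine congrArg (Quot.mk _) ?_
      dsimp only
      rw [← FunctorToTypes.map_comp_apply, ← Vs.imap_comp]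
      simp
      rfl
  
/-- Functoriality of the convolution product `∗` on `[𝒱, Set]` in both arguments. -/
def Conv2Map {M M' N N' : 𝒱 ⥤ Type u} (α : M ⟶ M') (β : N ⟶ N') :
    Conv2 Vs M N ⟶ Conv2 Vs M' N' where
  app C := TypeCat.ofHom (Quot.map
    (fun x => ⟨x.1, α.app (Vs.ihom x.1 C) x.2.1, β.app x.1 x.2.2⟩)
    (by rintro ⟨B, m, n⟩ ⟨B', m', n'⟩ ⟨f, e1, e2⟩
        dsimp only at e1 e2 ⊢
        refine ⟨f, ?_, ?_⟩
        · rw [e1]; exact NatTrans.naturality_apply α (Vs.imap f (𝟙 C)) m'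
        · rw [e2]; exact NatTrans.naturality_apply β f n))
  naturality {C C'} g := by
    ext q
    induction q using Quot.ind with
    | _ x =>
      obtain ⟨B, m, n⟩ := x
      exact congrArg (Quot.mk _) (by
        dsimp only
        rw [FunctorToTypes.naturality])

/-- The functor `M ∗ -`. -/
def Conv2Left (M : 𝒱 ⥤ Type u) : (𝒱 ⥤ Type u) ⥤ (𝒱 ⥤ Type u) where
  obj N := Conv2 Vs M N
  map β := Conv2Map Vs (𝟙 M) β
  map_id N := by
    ext C q
    induction q using Quot.ind with
    | _ x => rfl
  map_comp β γ := by
    ext C q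
    induction q using Quot.ind with
    | _ x => rfl

/-- The internal hom `[M,K]B = ∫_C [M[B,C], KC]` for the convolution structure on
`[𝒱, Set]`. -/
def Conv2Hom (M K : 𝒱 ⥤ Type u) : 𝒱 ⥤ Type u where
  obj B := { x : ∀ C : 𝒱, M.obj (Vs.ihom B C) → K.obj C //
      ∀ (C C' : 𝒱) (g : C ⟶ C') (m : M.obj (Vs.ihom B C)),
        x C' (M.map (Vs.imap (𝟙 B) g) m) = K.map g (x C m) }
  map {B B'} f := TypeCat.ofHom fun x => ⟨fun C m => x.1 C (M.map (Vs.imap f (𝟙 C)) m), by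
    intro C C' g m
    dsimp only
    rw [← FunctorToTypes.map_comp_apply, ← Vs.imap_comp, ← x.2 C C' g,
      ← FunctorToTypes.map_comp_apply, ← Vs.imap_comp]
    simp⟩
  map_id B := by
    ext x C m
    simp [Vs.imap_id]
  map_comp {B B' B''} f f' := by
    ext x C m
    show x.1 C (M.map (Vs.imap (f ≫ f') (𝟙 C)) m)
        = x.1 C (M.map (Vs.imap f (𝟙 C)) (M.map (Vs.imap f' (𝟙 C)) m))
    rw [← FunctorToTypes.map_comp_apply, ← Vs.imap_comp]
    simp

/-- The unit `J` of the convolution structure on `[𝒱, Set]`: `JC = 𝒱(I,C)`. -/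
def Conv2J : 𝒱 ⥤ Type u := coyoneda.obj (op Vs.unit)

/-!
Every constraint is defined on representatives of the coends, and on representatives each
right skew-monoidal axiom is the image under `M` of one axiom of `𝒱`: the pentagon is (SCC1),
the three unit triangles are (SCC2), (SCC3) and (SCC4) (the last combined with extranaturality
of `L`), and `r_J ∘ ℓ_J = 1` is (SCC5). Naturality and extranaturality of `L` are exactly what
makes the associator well defined on the coend. Closedness is currying: a map out of
`∫^B M[B,C] × NB`, natural in `C`, is a family `NB → [M[B,C], KC]` natural in `B` and `C`,
that is, a map into the end `∫_C [M[B,C], KC]`.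
-/

namespace SkewClosedStruct

variable {V : Type*} [Category V] (S : SkewClosedStruct V)

lemma imap_comp_id {A A' A'' : V} (f : A' ⟶ A) (f' : A'' ⟶ A') (B : V) :
    S.imap (f' ≫ f) (𝟙 B) = S.imap f (𝟙 B) ≫ S.imap f' (𝟙 B) := by
  rw [← S.imap_comp, Category.comp_id]

lemma imap_id_comp_imap_comp_id {A A' B B' : V} (f : A' ⟶ A) (g : B ⟶ B') :
    S.imap (𝟙 A) g ≫ S.imap f (𝟙 B') = S.imap f (𝟙 B) ≫ S.imap (𝟙 A') g := by
  rw [← S.imap_comp, ← S.imap_comp]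
  simp

lemma imap_comp_i_natural {B C C' : V} (b : S.unit ⟶ B) (g : C ⟶ C') :
    S.imap (𝟙 B) g ≫ S.imap b (𝟙 C') ≫ S.i C' = S.imap b (𝟙 C) ≫ S.i C ≫ g := by
  rw [← Category.assoc, imap_id_comp_imap_comp_id, Category.assoc, S.i_natural]

lemma L_comp_imap_imap_comp_i {E : V} (b : S.unit ⟶ E) (B C : V) :
    S.L E B C ≫ S.imap (𝟙 (S.ihom E B)) (S.imap b (𝟙 C)) ≫ S.imap (𝟙 (S.ihom E B)) (S.i C)
      = S.imap (S.imap b (𝟙 B) ≫ S.i B) (𝟙 C) := by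
  rw [← Category.assoc, S.L_extranatural b B C, Category.assoc,
    ← imap_id_comp_imap_comp_id, ← Category.assoc, S.SCC4, ← S.imap_comp, Category.comp_id]

lemma j_comp_imap_comp_i {C : V} (c : S.unit ⟶ C) :
    S.j C ≫ S.imap c (𝟙 C) ≫ S.i C = c := by
  rw [← Category.assoc, ← S.j_natural c, Category.assoc, S.i_natural, ← Category.assoc,
    S.SCC5, Category.id_comp]

end SkewClosedStruct

namespace Conv2

variable {M N : 𝒱 ⥤ Type u} {C : 𝒱}

/- `Quot.mk _ ⟨B, m, n⟩` is only type-correct after unfolding `Conv2Ix`, which defeats `rw` and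
`simp`; `mk` has the right type on the nose. -/
def mk (B : 𝒱) (m : M.obj (Vs.ihom B C)) (n : N.obj B) : (Conv2 Vs M N).obj C :=
  Quot.mk _ ⟨B, m, n⟩

lemma mk_eq_mk {B B' : 𝒱} (f : B ⟶ B') {m : M.obj (Vs.ihom B C)} {m' : M.obj (Vs.ihom B' C)}
    {n : N.obj B} {n' : N.obj B'} (hm : m = M.map (Vs.imap f (𝟙 C)) m') (hn : n' = N.map f n) :
    mk Vs B m n = mk Vs B' m' n' :=
  Quot.sound ⟨f, hm, hn⟩

lemma mk_congr {B : 𝒱} {m m' : M.obj (Vs.ihom B C)} {n n' : N.obj B} (hm : m = m')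
    (hn : n = n') : mk Vs B m n = mk Vs B m' n' := by
  rw [hm, hn]

@[elab_as_elim]
lemma ind {P : (Conv2 Vs M N).obj C → Prop}
    (mk : ∀ (B : 𝒱) (m : M.obj (Vs.ihom B C)) (n : N.obj B), P (mk Vs B m n))
    (q : (Conv2 Vs M N).obj C) : P q :=
  Quot.ind (fun x => mk x.1 x.2.1 x.2.2) q

@[ext]
lemma obj_hom_ext {X : Type u} {f g : (Conv2 Vs M N).obj C ⟶ X}
    (h : ∀ (B : 𝒱) (m : M.obj (Vs.ihom B C)) (n : N.obj B), f (mk Vs B m n) = g (mk Vs B m n)) :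
    f = g := by
  ext q
  induction q using Conv2.ind with
  | mk B m n => exact h B m n

@[simp]
lemma map_mk {C' : 𝒱} (g : C ⟶ C') (B : 𝒱) (m : M.obj (Vs.ihom B C)) (n : N.obj B) :
    (Conv2 Vs M N).map g (mk Vs B m n) = mk Vs B (M.map (Vs.imap (𝟙 B) g) m) n :=
  rfl

end Conv2

@[simp]
lemma conv2Map_app_mk {M M' N N' : 𝒱 ⥤ Type u} (α : M ⟶ M') (β : N ⟶ N') (C B : 𝒱)
    (m : M.obj (Vs.ihom B C)) (n : N.obj B) :
    (Conv2Map Vs α β).app C (Conv2.mk Vs B m n)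
      = Conv2.mk Vs B (α.app (Vs.ihom B C) m) (β.app B n) :=
  rfl

def Conv2AssocOnMk (M N K : 𝒱 ⥤ Type u) (C B : 𝒱) (m : M.obj (Vs.ihom B C)) :
    (Conv2 Vs N K).obj B → (Conv2 Vs (Conv2 Vs M N) K).obj C :=
  Quot.lift
    (fun y => Conv2.mk Vs y.1 (Conv2.mk Vs (Vs.ihom y.1 B) (M.map (Vs.L y.1 B C) m) y.2.1) y.2.2)
    (by
      rintro ⟨E, n, k⟩ ⟨E', n', k'⟩ ⟨f, hn, hk⟩
      refine Quot.sound ⟨f, Eq.symm (Conv2.mk_eq_mk Vs (Vs.imap f (𝟙 B)) ?_ hn), hk⟩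
      rw [← Functor.map_comp_apply, ← Functor.map_comp_apply, Vs.L_extranatural f])

def Conv2Assoc (M N K : 𝒱 ⥤ Type u) :
    Conv2 Vs M (Conv2 Vs N K) ⟶ Conv2 Vs (Conv2 Vs M N) K where
  app C := TypeCat.ofHom (Quot.lift (fun x => Conv2AssocOnMk Vs M N K C x.1 x.2.1 x.2.2)
    (by
      rintro ⟨B, m, q⟩ ⟨B', m', q'⟩ ⟨h, hm, hq⟩
      dsimp only at hm hq
      rw [hm, hq]
      induction q using Conv2.ind with
      | mk E n k =>
        refine Conv2.mk_congr Vs (Conv2.mk_eq_mk Vs (Vs.imap (𝟙 E) h) ?_ rfl) rfl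
        rw [← Functor.map_comp_apply, ← Functor.map_comp_apply, Vs.L_natural E h (𝟙 C),
          Vs.imap_id]))
  naturality {C C'} g := by
    ext B m q
    induction q using Conv2.ind with
    | mk E n k =>
      refine Conv2.mk_congr Vs (Conv2.mk_congr Vs ?_ rfl) rfl
      rw [← Functor.map_comp_apply, ← Functor.map_comp_apply, Vs.L_natural E (𝟙 B) g,
        Vs.imap_id]

@[simp]
lemma conv2Assoc_app_mk (M N K : 𝒱 ⥤ Type u) (C B E : 𝒱) (m : M.obj (Vs.ihom B C))
    (n : N.obj (Vs.ihom E B)) (k : K.obj E) :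
    (Conv2Assoc Vs M N K).app C (Conv2.mk Vs B m (Conv2.mk Vs E n k))
      = Conv2.mk Vs E (Conv2.mk Vs (Vs.ihom E B) (M.map (Vs.L E B C) m) n) k :=
  rfl

def Conv2LeftUnit (M : 𝒱 ⥤ Type u) : M ⟶ Conv2 Vs (Conv2J Vs) M where
  app C := TypeCat.ofHom fun m => Conv2.mk Vs C (Vs.j C) m
  naturality {C C'} g := by
    ext m
    exact (Conv2.mk_eq_mk Vs g (Vs.j_natural g) rfl).symm

@[simp]
lemma conv2LeftUnit_app (M : 𝒱 ⥤ Type u) (C : 𝒱) (m : M.obj C) :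
    (Conv2LeftUnit Vs M).app C m = Conv2.mk Vs C (Vs.j C) m :=
  rfl

def Conv2RightUnit (M : 𝒱 ⥤ Type u) : Conv2 Vs M (Conv2J Vs) ⟶ M where
  app C := TypeCat.ofHom (Quot.lift
    (fun x => M.map (Vs.i C) (M.map (Vs.imap x.2.2 (𝟙 C)) x.2.1))
    (by
      rintro ⟨B, m, b⟩ ⟨B', m', b'⟩ ⟨f, hm, hb⟩
      change Vs.unit ⟶ B at b
      change b' = b ≫ f at hb
      dsimp only at hm ⊢
      rw [hm, hb, Vs.imap_comp_id, Functor.map_comp_apply]))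
  naturality {C C'} g := by
    ext B m b
    change Vs.unit ⟶ B at b
    change M.map (Vs.i C') (M.map (Vs.imap b (𝟙 C')) (M.map (Vs.imap (𝟙 B) g) m))
      = M.map g (M.map (Vs.i C) (M.map (Vs.imap b (𝟙 C)) m))
    simp only [← Functor.map_comp_apply, Category.assoc, Vs.imap_comp_i_natural]

@[simp]
lemma conv2RightUnit_app_mk (M : 𝒱 ⥤ Type u) (C B : 𝒱) (m : M.obj (Vs.ihom B C))
    (b : (Conv2J Vs).obj B) :
    (Conv2RightUnit Vs M).app C (Conv2.mk Vs B m b)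
      = M.map (Vs.i C) (M.map (Vs.imap b (𝟙 C)) m) :=
  rfl

lemma conv2Assoc_naturality {M M' N N' K K' : 𝒱 ⥤ Type u}
    (α : M ⟶ M') (β : N ⟶ N') (γ : K ⟶ K') :
    Conv2Map Vs α (Conv2Map Vs β γ) ≫ Conv2Assoc Vs M' N' K'
      = Conv2Assoc Vs M N K ≫ Conv2Map Vs (Conv2Map Vs α β) γ := by
  ext C B m q
  induction q using Conv2.ind with
  | mk E n k =>
    simp only [NatTrans.comp_app_apply, conv2Map_app_mk, conv2Assoc_app_mk,
      NatTrans.naturality_apply]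

lemma conv2LeftUnit_naturality {M M' : 𝒱 ⥤ Type u} (α : M ⟶ M') :
    α ≫ Conv2LeftUnit Vs M' = Conv2LeftUnit Vs M ≫ Conv2Map Vs (𝟙 (Conv2J Vs)) α :=
  rfl

lemma conv2RightUnit_naturality {M M' : 𝒱 ⥤ Type u} (α : M ⟶ M') :
    Conv2Map Vs α (𝟙 (Conv2J Vs)) ≫ Conv2RightUnit Vs M' = Conv2RightUnit Vs M ≫ α := by
  ext C B m b
  simp only [NatTrans.comp_app_apply, conv2Map_app_mk, NatTrans.id_app, types_id_apply,
    conv2RightUnit_app_mk, NatTrans.naturality_apply]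

lemma conv2Assoc_pentagon (M N K P : 𝒱 ⥤ Type u) :
    Conv2Assoc Vs M N (Conv2 Vs K P) ≫ Conv2Assoc Vs (Conv2 Vs M N) K P
      = Conv2Map Vs (𝟙 M) (Conv2Assoc Vs N K P) ≫ Conv2Assoc Vs M (Conv2 Vs N K) P ≫
          Conv2Map Vs (Conv2Assoc Vs M N K) (𝟙 P) := by
  ext C B m q
  induction q using Conv2.ind with
  | mk E n q =>
    induction q using Conv2.ind with
    | mk F p l =>
      simp only [NatTrans.comp_app_apply, NatTrans.id_app, types_id_apply, conv2Map_app_mk,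
        conv2Assoc_app_mk, Conv2.map_mk]
      refine Conv2.mk_congr Vs
        (Conv2.mk_congr Vs (Conv2.mk_eq_mk Vs (Vs.L F E B) ?_ rfl) rfl) rfl
      simp only [← Functor.map_comp_apply, Category.assoc, Vs.SCC1]

lemma conv2LeftUnit_assoc_rightUnit (M N : 𝒱 ⥤ Type u) :
    Conv2Map Vs (𝟙 M) (Conv2LeftUnit Vs N) ≫ Conv2Assoc Vs M (Conv2J Vs) N ≫
        Conv2Map Vs (Conv2RightUnit Vs M) (𝟙 N) = 𝟙 (Conv2 Vs M N) := by
  ext C B m n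
  refine Conv2.mk_congr Vs ?_ rfl
  change M.map (Vs.i _) (M.map (Vs.imap (Vs.j B) (𝟙 _)) (M.map (Vs.L B B C) m)) = m
  rw [← Functor.map_comp_apply, ← Functor.map_comp_apply, Vs.SCC2, Functor.map_id_apply]

lemma conv2LeftUnit_assoc (M N : 𝒱 ⥤ Type u) :
    Conv2LeftUnit Vs (Conv2 Vs M N) ≫ Conv2Assoc Vs (Conv2J Vs) M N
      = Conv2Map Vs (Conv2LeftUnit Vs M) (𝟙 N) := by
  ext C B m n
  exact Conv2.mk_congr Vs (Conv2.mk_congr Vs (Vs.SCC3 B C) rfl) rfl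

lemma conv2Assoc_rightUnit (M N : 𝒱 ⥤ Type u) :
    Conv2Assoc Vs M N (Conv2J Vs) ≫ Conv2RightUnit Vs (Conv2 Vs M N)
      = Conv2Map Vs (𝟙 M) (Conv2RightUnit Vs N) := by
  ext C B m q
  induction q using Conv2.ind with
  | mk E n b =>
    simp only [NatTrans.comp_app_apply, NatTrans.id_app, types_id_apply, conv2Map_app_mk,
      conv2Assoc_app_mk, conv2RightUnit_app_mk, Conv2.map_mk]
    change Vs.unit ⟶ E at b
    refine Conv2.mk_eq_mk Vs (Vs.imap b (𝟙 B) ≫ Vs.i B) ?_ (Functor.map_comp_apply N _ _ n).symm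
    simp only [← Functor.map_comp_apply, Category.assoc, Vs.L_comp_imap_imap_comp_i]

lemma conv2LeftUnit_rightUnit :
    Conv2LeftUnit Vs (Conv2J Vs) ≫ Conv2RightUnit Vs (Conv2J Vs) = 𝟙 (Conv2J Vs) := by
  ext C c
  exact (Category.assoc _ _ _).trans (Vs.j_comp_imap_comp_i c)

def Conv2Curry {M N K : 𝒱 ⥤ Type u} (φ : Conv2 Vs M N ⟶ K) : N ⟶ Conv2Hom Vs M K where
  app B := TypeCat.ofHom fun n =>
    ⟨fun C m => φ.app C (Conv2.mk Vs B m n),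
      fun _ _ g m => NatTrans.naturality_apply φ g (Conv2.mk Vs B m n)⟩
  naturality {B B'} f := by
    ext n
    exact Subtype.ext (funext₂ fun C m => congrArg (φ.app C) (Conv2.mk_eq_mk Vs f rfl rfl).symm)

def Conv2Uncurry {M N K : 𝒱 ⥤ Type u} (ψ : N ⟶ Conv2Hom Vs M K) : Conv2 Vs M N ⟶ K where
  app C := TypeCat.ofHom (Quot.lift (fun x => (ψ.app x.1 x.2.2).1 C x.2.1)
    (by
      rintro ⟨B, m, n⟩ ⟨B', m', n'⟩ ⟨f, hm, hn⟩
      dsimp only at hm hn ⊢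
      rw [hm, hn, NatTrans.naturality_apply ψ f n]
      rfl))
  naturality {C C'} g := by
    ext B m n
    exact (ψ.app B n).2 C C' g m

def conv2HomEquiv (M N K : 𝒱 ⥤ Type u) : (Conv2 Vs M N ⟶ K) ≃ (N ⟶ Conv2Hom Vs M K) where
  toFun := Conv2Curry Vs
  invFun := Conv2Uncurry Vs
  left_inv φ := by
    ext C B m n
    rfl
  right_inv ψ := by
    ext B n
    exact Subtype.ext rfl

def Conv2HomFunctor (M : 𝒱 ⥤ Type u) : (𝒱 ⥤ Type u) ⥤ (𝒱 ⥤ Type u) where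
  obj K := Conv2Hom Vs M K
  map {K K'} γ :=
    { app B := TypeCat.ofHom fun x => ⟨fun C m => γ.app C (x.1 C m), fun C C' g m => by
        dsimp only
        rw [x.2 C C' g m, NatTrans.naturality_apply]⟩
      naturality _ _ _ := rfl }

def conv2Adjunction (M : 𝒱 ⥤ Type u) : Conv2Left Vs M ⊣ Conv2HomFunctor Vs M :=
  Adjunction.mkOfHomEquiv
    { homEquiv := conv2HomEquiv Vs M
      homEquiv_naturality_left_symm := fun _ _ =>
        NatTrans.ext (funext fun _ => Conv2.obj_hom_ext Vs fun _ _ _ => rfl)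
      homEquiv_naturality_right := fun _ _ => rfl }

/-- (Street, "Skew-closed categories", §10, second example.)
For a small left skew-closed category `𝒱`, the convolution product
`(M∗N)C = ∫^B M[B,C] × NB` with unit `J = 𝒱(I,-)`, left unit `ℓ_M : m ↦ [(j_C, m)]`,
right unit `r_M` given by the co-Yoneda isomorphism followed by `M(i_C)`, and
associativity induced by `(m,n,k) ↦ (M(L^E_{B,C})m, n, k)`, is a **right**
skew-monoidal structure on `[𝒱, Set]`, and it is closed: each `M∗-` has a right
adjoint `[M,-]` with `[M,K]B = ∫_C [M[B,C], KC]`. -/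
theorem convolution_of_skew_closed_right_skew_monoidal :
    ∃ (a : ∀ M N K : 𝒱 ⥤ Type u,
        Conv2 Vs M (Conv2 Vs N K) ⟶ Conv2 Vs (Conv2 Vs M N) K)
      (l : ∀ M : 𝒱 ⥤ Type u, M ⟶ Conv2 Vs (Conv2J Vs) M)
      (r : ∀ M : 𝒱 ⥤ Type u, Conv2 Vs M (Conv2J Vs) ⟶ M),
      -- the constraints are given by the formulas in the statement:
      (∀ (M N K : 𝒱 ⥤ Type u) (C B E : 𝒱) (m : M.obj (Vs.ihom B C))
          (n : N.obj (Vs.ihom E B)) (k : K.obj E),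
        (a M N K).app C (Quot.mk _ ⟨B, m, Quot.mk _ ⟨E, n, k⟩⟩)
          = Quot.mk _ ⟨E, Quot.mk _ ⟨Vs.ihom E B, M.map (Vs.L E B C) m, n⟩, k⟩) ∧
      (∀ (M : 𝒱 ⥤ Type u) (C : 𝒱) (m : M.obj C),
        (l M).app C m = Quot.mk _ ⟨C, Vs.j C, m⟩) ∧
      (∀ (M : 𝒱 ⥤ Type u) (C B : 𝒱) (m : M.obj (Vs.ihom B C)) (b : Vs.unit ⟶ B),
        (r M).app C (Quot.mk _ ⟨B, m, b⟩)
          = M.map (Vs.i C) (M.map (Vs.imap b (𝟙 C)) m)) ∧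
      -- they are natural:
      (∀ (M M' N N' K K' : 𝒱 ⥤ Type u) (α : M ⟶ M') (β : N ⟶ N') (γ : K ⟶ K'),
        Conv2Map Vs α (Conv2Map Vs β γ) ≫ a M' N' K'
          = a M N K ≫ Conv2Map Vs (Conv2Map Vs α β) γ) ∧
      (∀ (M M' : 𝒱 ⥤ Type u) (α : M ⟶ M'),
        α ≫ l M' = l M ≫ Conv2Map Vs (𝟙 (Conv2J Vs)) α) ∧
      (∀ (M M' : 𝒱 ⥤ Type u) (α : M ⟶ M'),
        Conv2Map Vs α (𝟙 (Conv2J Vs)) ≫ r M' = r M ≫ α) ∧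
      -- the five right skew-monoidal axioms:
      (∀ M N K L' : 𝒱 ⥤ Type u,
        a M N (Conv2 Vs K L') ≫ a (Conv2 Vs M N) K L'
          = Conv2Map Vs (𝟙 M) (a N K L') ≫ a M (Conv2 Vs N K) L' ≫
              Conv2Map Vs (a M N K) (𝟙 L')) ∧
      (∀ M N : 𝒱 ⥤ Type u,
        Conv2Map Vs (𝟙 M) (l N) ≫ a M (Conv2J Vs) N ≫ Conv2Map Vs (r M) (𝟙 N)
          = 𝟙 (Conv2 Vs M N)) ∧
      (∀ M N : 𝒱 ⥤ Type u,
        l (Conv2 Vs M N) ≫ a (Conv2J Vs) M N = Conv2Map Vs (l M) (𝟙 N)) ∧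
      (∀ M N : 𝒱 ⥤ Type u,
        a M N (Conv2J Vs) ≫ r (Conv2 Vs M N) = Conv2Map Vs (𝟙 M) (r N)) ∧
      (l (Conv2J Vs) ≫ r (Conv2J Vs) = 𝟙 (Conv2J Vs)) ∧
      -- and the structure is closed, with internal hom the end `[M,K]B = ∫_C [M[B,C],KC]`:
      (∀ M : 𝒱 ⥤ Type u, ∃ G : (𝒱 ⥤ Type u) ⥤ (𝒱 ⥤ Type u),
        (∀ K : 𝒱 ⥤ Type u, G.obj K = Conv2Hom Vs M K) ∧
        Nonempty (Conv2Left Vs M ⊣ G)) :=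
  ⟨Conv2Assoc Vs, Conv2LeftUnit Vs, Conv2RightUnit Vs,
    conv2Assoc_app_mk Vs, conv2LeftUnit_app Vs, conv2RightUnit_app_mk Vs,
    fun _ _ _ _ _ _ => conv2Assoc_naturality Vs,
    fun _ _ => conv2LeftUnit_naturality Vs,
    fun _ _ => conv2RightUnit_naturality Vs,
    conv2Assoc_pentagon Vs, conv2LeftUnit_assoc_rightUnit Vs, conv2LeftUnit_assoc Vs,
    conv2Assoc_rightUnit Vs, conv2LeftUnit_rightUnit Vs,
    fun M => ⟨Conv2HomFunctor Vs M, fun _ => rfl, ⟨conv2Adjunction Vs M⟩⟩⟩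

end ConvTwo
end
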